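/- arXiv:1312.3182 — 9 statements merged into one kernel-verified Lean document; each statement's English description precedes it below -/
import Mathlib

section
/- A connected graph G is center critical (i.e., for every proper subset S of V(G), the S-center of G differs from the center of G) if and only if G is self-centered and every vertex of G has a unique eccentric vertex. -/
/-- The `S`-eccentricity of a vertex `v`: the maximum distance from `v` to a vertex of `S`. -/
noncomputable def sEcc {V : Type*} (G : SimpleGraph V) (S : Finset V) (v : V) : ℕ :=
  S.sup fun x => G.dist v x

/-- The `S`-center of `G`: the set of vertices of minimum `S`-eccentricity. -/
noncomputable def sCenter {V : Type*} (G : SimpleGraph V) (S : Finset V) : Set V :=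
  {v | ∀ w, sEcc G S v ≤ sEcc G S w}

/-- A connected graph `G` is center critical (for every nonempty proper subset `S` of the
vertices, the `S`-center differs from the center) if and only if `G` is self-centered and
every vertex has a unique eccentric vertex. -/
theorem center_critical_iff_selfCentered_and_uev {V : Type*} [Fintype V]
    (G : SimpleGraph V) (hG : G.Connected) :
    (∀ S : Finset V, S.Nonempty → S ≠ Finset.univ →
        sCenter G S ≠ sCenter G Finset.univ) ↔
      ((∀ u v : V, sEcc G Finset.univ u = sEcc G Finset.univ v) ∧
        ∀ u : V, ∃! v : V, G.dist u v = sEcc G Finset.univ u) := by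
  classical
  haveI : Nonempty V := hG.nonempty
  set ecc : V → ℕ := fun v => sEcc G Finset.univ v with hecc_def
  have hdist_le_ecc : ∀ u x : V, G.dist u x ≤ ecc u := fun u x =>
    Finset.le_sup (Finset.mem_univ x)
  constructor
  · intro h
    by_cases hV : ∀ a b : V, a = b
    · refine ⟨fun u v => by rw [hV u v], fun u => ?_⟩
      have h0 : ecc u = 0 := by
        apply Nat.le_antisymm _ (Nat.zero_le _)
        apply Finset.sup_le
        intro x _
        rw [hV x u]
        simp [SimpleGraph.dist_self]
      exact ⟨u, by simp [← hecc_def, h0, SimpleGraph.dist_self], fun y _ => hV y u⟩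
    · push_neg at hV
      obtain ⟨a, b, hab⟩ := hV
      -- Step 1: every vertex y is the unique eccentric vertex of some vertex u.
      have key : ∀ y : V, ∃ u : V, G.dist u y = ecc u ∧
          ∀ x, G.dist u x = ecc u → x = y := by
        intro y
        by_contra hcon
        push_neg at hcon
        have hS : (Finset.univ.erase y).Nonempty := by
          rcases eq_or_ne a y with rfl | hay
          · exact ⟨b, Finset.mem_erase.2 ⟨Ne.symm hab, Finset.mem_univ _⟩⟩
          · exact ⟨a, Finset.mem_erase.2 ⟨hay, Finset.mem_univ _⟩⟩
        have hSne : (Finset.univ.erase y) ≠ Finset.univ := by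
          intro hEq
          have hy := Finset.mem_univ y
          rw [← hEq] at hy
          exact (Finset.notMem_erase y _) hy
        have heq : ∀ v, sEcc G (Finset.univ.erase y) v = sEcc G Finset.univ v := by
          intro v
          apply Nat.le_antisymm (Finset.sup_mono (Finset.subset_univ _))
          obtain ⟨m, -, hm⟩ := Finset.exists_mem_eq_sup (Finset.univ : Finset V)
            Finset.univ_nonempty (fun x => G.dist v x)
          rcases eq_or_ne m y with rfl | hmy
          · obtain ⟨x, hx, hxy⟩ := hcon v hm.symm
            calc (Finset.univ.sup fun x => G.dist v x) = ecc v := rfl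
              _ = G.dist v x := hx.symm
              _ ≤ _ := Finset.le_sup (Finset.mem_erase.2 ⟨hxy, Finset.mem_univ _⟩)
          · rw [hm]
            exact Finset.le_sup (Finset.mem_erase.2 ⟨hmy, Finset.mem_univ _⟩)
        have : sCenter G (Finset.univ.erase y) = sCenter G Finset.univ := by
          unfold sCenter
          ext v
          simp only [Set.mem_setOf_eq, heq]
        exact h _ hS hSne this
      choose g hg1 hg2 using key
      have hginj : Function.Injective g := by
        intro y₁ y₂ hgy
        have h1 := hg1 y₂
        rw [← hgy] at h1
        exact (hg2 y₁ y₂ h1).symm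
      have hgsurj : Function.Surjective g := Finite.injective_iff_surjective.mp hginj
      have huev : ∀ u : V, ∃! v : V, G.dist u v = ecc u := by
        intro u
        obtain ⟨y, rfl⟩ := hgsurj u
        exact ⟨y, hg1 y, fun x hx => hg2 y x hx⟩
      refine ⟨?_, huev⟩
      -- Step 2: self-centered.
      by_contra hcon
      push_neg at hcon
      obtain ⟨u0, v0, hne⟩ := hcon
      obtain ⟨c, -, hc⟩ := Finset.exists_min_image (Finset.univ : Finset V) ecc
        Finset.univ_nonempty
      have hc' : ∀ v : V, ecc c ≤ ecc v := fun v => hc v (Finset.mem_univ v)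
      set r := ecc c with hr
      have hw : ∃ w : V, r < ecc w := by
        rcases lt_or_eq_of_le (hc' u0) with h1 | h1
        · exact ⟨u0, h1⟩
        · rcases lt_or_eq_of_le (hc' v0) with h2 | h2
          · exact ⟨v0, h2⟩
          · exact absurd (h1.symm.trans h2) hne
      obtain ⟨w, hw⟩ := hw
      -- find a boundary edge along a walk from c to w
      have hbd : ∀ {x z : V} (_ : G.Walk x z), ecc x = r → r < ecc z →
          ∃ c' w' : V, G.Adj c' w' ∧ ecc c' = r ∧ r < ecc w' := by
        intro x z p
        induction p with
        | nil => intro h1 h2; rw [h1] at h2; exact absurd h2 (lt_irrefl r)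
        | @cons x m z hadj p ih =>
          intro h1 h2
          rcases lt_or_eq_of_le (hc' m) with hm | hm
          · exact ⟨x, m, hadj, h1, hm⟩
          · exact ih hm.symm h2
      obtain ⟨c', w', hadj, hcr, hwr⟩ := hbd ((hG.preconnected c w).some) rfl hw
      obtain ⟨t, htd, htu⟩ := huev c'
      obtain ⟨s, hsd, hsu⟩ := huev w'
      -- s ≠ t since the unique-eccentric-vertex map is injective (via g)
      have hst : s ≠ t := by
        intro hEq
        obtain ⟨yc, rfl⟩ := hgsurj c'
        obtain ⟨yw, rfl⟩ := hgsurj w'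
        have h1 : t = yc := hg2 yc t htd
        have h2 : s = yw := hg2 yw s hsd
        have : yc = yw := by rw [← h1, ← h2, hEq]
        rw [this] at hcr
        rw [hcr] at hwr
        exact absurd hwr (lt_irrefl r)
      have hcs : G.dist c' s < r := by
        rcases lt_or_eq_of_le (hdist_le_ecc c' s) with h1 | h1
        · rw [← hcr]; exact h1
        · exact absurd (htu s h1) hst
      have htri : G.dist w' s ≤ G.dist w' c' + G.dist c' s :=
        hG.dist_triangle
      have hd1 : G.dist w' c' ≤ 1 := by
        have := SimpleGraph.dist_le (hadj.symm.toWalk)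
        simpa using this
      have : ecc w' ≤ r := by
        rw [← hsd]
        omega
      omega
  · rintro ⟨hsc, huev⟩ S hS hSne heq
    have huniv : sCenter G Finset.univ = Set.univ := by
      ext v
      simp only [sCenter, Set.mem_setOf_eq, Set.mem_univ, iff_true]
      intro w
      exact le_of_eq (hsc v w)
    rw [huniv] at heq
    have hall : ∀ v w : V, sEcc G S v ≤ sEcc G S w := by
      intro v w
      have hv : v ∈ sCenter G S := by rw [heq]; trivial
      exact hv w
    obtain ⟨s0, hs0⟩ := hS
    obtain ⟨y, hy⟩ : ∃ y, y ∉ S := by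
      by_contra hcn
      push_neg at hcn
      exact hSne (Finset.eq_univ_iff_forall.2 hcn)
    obtain ⟨fs, hfs, -⟩ := huev s0
    have h1 : ecc s0 ≤ sEcc G S fs :=
      calc ecc s0 = G.dist s0 fs := hfs.symm
        _ = G.dist fs s0 := SimpleGraph.dist_comm
        _ ≤ sEcc G S fs := Finset.le_sup (f := fun x => G.dist fs x) hs0
    have hSecc : ∀ v : V, sEcc G S v = ecc v := by
      intro v
      apply Nat.le_antisymm (Finset.sup_mono (Finset.subset_univ _))
      calc ecc v = ecc s0 := hsc v s0
        _ ≤ sEcc G S fs := h1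
        _ ≤ sEcc G S v := hall fs v
    -- the eccentric vertex of y lies in S
    obtain ⟨fy, hfy, hfyu⟩ := huev y
    obtain ⟨v, hvS, hv⟩ := Finset.exists_mem_eq_sup S ⟨s0, hs0⟩ (fun x => G.dist y x)
    have hv' : G.dist y v = ecc y := by rw [← hv]; exact hSecc y
    have hvfy : v = fy := hfyu v hv'
    rw [hvfy] at hvS
    -- the eccentric vertex of fy is y itself, but y ∉ S
    obtain ⟨x, hxS, hx⟩ := Finset.exists_mem_eq_sup S ⟨s0, hs0⟩ (fun z => G.dist fy z)
    have hx' : G.dist fy x = ecc fy := by rw [← hx]; exact hSecc fy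
    obtain ⟨t, htd, htu⟩ := huev fy
    have hxt : x = t := htu x hx'
    have hyt : y = t := by
      apply htu
      rw [SimpleGraph.dist_comm, hfy]
      exact hsc y fy
    rw [hxt] at hxS
    rw [← hyt] at hxS
    exact hy hxS
end

section
/- For any connected graph G and any nonempty subset S of vertices, the S-center C_S(G) is contained in a single block of G. -/
/-- `B` induces a connected subgraph of `G` without a cut-vertex. -/
def IsCutFree {V : Type*} (G : SimpleGraph V) (B : Set V) : Prop :=
  B.Nonempty ∧ (G.induce B).Connected ∧ ∀ v ∈ B, (G.induce (B \ {v})).Preconnected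

/-- A block of `G`: a maximal set of vertices inducing a connected subgraph with no
cut-vertex. -/
def IsBlock {V : Type*} (G : SimpleGraph V) (B : Set V) : Prop :=
  IsCutFree G B ∧ ∀ B', B ⊆ B' → IsCutFree G B' → B' = B

/-!
If a vertex `v` separated two `S`-central vertices `w₁, w₂ ≠ v`, take `u ∈ S` farthest from `v`.
Some walk from each `wᵢ` to `u` avoids `v`, since otherwise
`e_S(wᵢ) ≥ d(wᵢ, v) + d(v, u) > e_S(v)`; joining two such walks gives a `w₁`–`w₂` walk avoiding `v`.

A vertex `w` outside a block `B` is separated from all of `B` by a single vertex of `B`: two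
different entry points into `B` would be joined by an ear outside `B`, and adding the ear keeps
`B` cut-free, against maximality. By induction along a path, two vertices that no third vertex
separates therefore lie in a common block.

Now take a block `B` whose set of central vertices is maximal. A central `w ∉ B` is separated from
`B` by some `v ∈ B`, so `v` is the only possible central vertex of `B`; but a block containing `w`
(and `v`, if it is central) then has strictly more central vertices.
-/

open SimpleGraph Walk

def Separates {V : Type*} (G : SimpleGraph V) (x a b : V) : Prop :=
  ∀ p : G.Walk a b, x ∈ p.support

section Blocks

variable {V : Type*} {G : SimpleGraph V}

theorem SimpleGraph.Walk.IsPath.connected_induce_support_diff_start {u v : V} {p : G.Walk u v}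
    (hp : p.IsPath) (huv : u ≠ v) : (G.induce ({x | x ∈ p.support} \ {u})).Connected := by
  cases p with
  | nil => exact absurd rfl huv
  | cons h q =>
    have hu : u ∉ q.support := ((cons_isPath_iff h q).1 hp).2
    have hT : {x | x ∈ (cons h q).support} \ {u} = {x | x ∈ q.support} := by
      ext x
      simp only [support_cons, Set.mem_sdiff, Set.mem_ofPred_eq, List.mem_cons,
        Set.mem_singleton_iff]
      grind
    rw [hT]
    exact q.connected_induce_support

theorem SimpleGraph.Walk.IsPath.connected_induce_support_diff_end {u v : V} {p : G.Walk u v}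
    (hp : p.IsPath) (huv : u ≠ v) : (G.induce ({x | x ∈ p.support} \ {v})).Connected := by
  have h := hp.reverse.connected_induce_support_diff_start huv.symm
  rwa [show {x | x ∈ p.reverse.support} = {x | x ∈ p.support} by simp] at h

theorem SimpleGraph.Walk.exists_walk_outside_adj_mem_support {B : Set V} {x y : V}
    (p : G.Walk x y) (hx : x ∉ B) (hy : y ∈ B) :
    ∃ c ∈ B, c ∈ p.support ∧ ∃ u, G.Adj u c ∧ ∃ q : G.Walk x u, ∀ z ∈ q.support, z ∉ B := by
  induction p with
  | nil => exact absurd hy hx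
  | @cons x x' y h p ih =>
    by_cases hx' : x' ∈ B
    · exact ⟨x', hx', by simp, x, h, nil, by simpa⟩
    · obtain ⟨c, hc, hcp, u, hu, q, hq⟩ := ih hx' hy
      exact ⟨c, hc, by simp [hcp], u, hu, cons h q, by simpa using ⟨hx, hq⟩⟩

theorem preconnected_induce_of_subsingleton {s : Set V} (hs : s.Subsingleton) :
    (G.induce s).Preconnected :=
  haveI := hs.coe_sort
  Preconnected.of_subsingleton

theorem isCutFree_singleton (v : V) : IsCutFree G {v} :=
  ⟨Set.singleton_nonempty v,
    ⟨preconnected_induce_of_subsingleton Set.subsingleton_singleton⟩,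
    fun _ _ =>
      preconnected_induce_of_subsingleton (Set.subsingleton_singleton.anti Set.sdiff_subset)⟩

theorem isCutFree_pair {a b : V} (h : G.Adj a b) : IsCutFree G {a, b} := by
  refine ⟨Set.insert_nonempty a {b}, induce_pair_connected_of_adj h, fun v hv => ?_⟩
  refine preconnected_induce_of_subsingleton fun x hx y hy => ?_
  simp only [Set.mem_sdiff, Set.mem_insert_iff, Set.mem_singleton_iff] at hv hx hy
  grind

theorem IsCutFree.exists_isBlock_superset [Finite V] {B₀ : Set V} (h : IsCutFree G B₀) :
    ∃ B, B₀ ⊆ B ∧ IsBlock G B := by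
  obtain ⟨B, ⟨hB₀B, hB⟩, hmax⟩ := Set.Finite.exists_maximalFor id
    {B | B₀ ⊆ B ∧ IsCutFree G B} (Set.toFinite _) ⟨B₀, subset_rfl, h⟩
  exact ⟨B, hB₀B, hB, fun B' hBB' hB' => (hmax ⟨hB₀B.trans hBB', hB'⟩ hBB').antisymm hBB'⟩

theorem IsCutFree.union_support_of_isPath {B : Set V} (hB : IsCutFree G B) {a b : V}
    (ha : a ∈ B) (hb : b ∈ B) (hab : a ≠ b) {W : G.Walk a b} (hW : W.IsPath)
    (hWB : ∀ x ∈ W.support, x ∈ B → x = a ∨ x = b) :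
    IsCutFree G (B ∪ {x | x ∈ W.support}) := by
  classical
  obtain ⟨hne, hconn, hcut⟩ := hB
  have hWconn := W.connected_induce_support
  refine ⟨hne.mono Set.subset_union_left, induce_union_connected hconn.preconnected
    hWconn.preconnected ⟨a, ha, W.start_mem_support⟩, fun v hv => ?_⟩
  by_cases hvW : v ∈ W.support
  swap
  · have hav : a ≠ v := fun h => hvW (h ▸ W.start_mem_support)
    rw [Set.union_sdiff_distrib, Set.sdiff_singleton_eq_self (s := {x | x ∈ W.support}) hvW]
    exact (induce_union_connected (hcut v (hv.resolve_right hvW)) hWconn.preconnected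
      ⟨a, ⟨ha, hav⟩, W.start_mem_support⟩).preconnected
  by_cases hvB : v ∈ B
  · rw [Set.union_sdiff_distrib]
    rcases hWB v hvW hvB with rfl | rfl
    · exact (induce_union_connected (hcut v hvB)
        (hW.connected_induce_support_diff_start hab).preconnected
        ⟨b, ⟨hb, hab.symm⟩, W.end_mem_support, hab.symm⟩).preconnected
    · exact (induce_union_connected (hcut v hvB)
        (hW.connected_induce_support_diff_end hab).preconnected
        ⟨a, ⟨ha, hab⟩, W.start_mem_support, hab⟩).preconnected
  -- Cutting `W` at `v` leaves two connected pieces, attached to `B` at `a` and at `b`.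
  have hav : a ≠ v := fun h => hvB (h ▸ ha)
  have hvb : v ≠ b := fun h => hvB (h ▸ hb)
  have hsplit : (B ∪ {x | x ∈ W.support}) \ {v} =
      (B ∪ ({x | x ∈ (W.takeUntil v hvW).support} \ {v})) ∪
        ({x | x ∈ (W.dropUntil v hvW).support} \ {v}) := by
    ext x
    have := mem_support_append_iff (t := x) (W.takeUntil v hvW) (W.dropUntil v hvW)
    rw [W.take_spec hvW] at this
    simp only [Set.mem_sdiff, Set.mem_union, Set.mem_ofPred_eq, Set.mem_singleton_iff, this]
    grind
  rw [hsplit]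
  refine (induce_union_connected (induce_union_connected hconn.preconnected
    ((hW.takeUntil hvW).connected_induce_support_diff_end hav).preconnected
    ⟨a, ha, start_mem_support _, hav⟩).preconnected
    ((hW.dropUntil hvW).connected_induce_support_diff_start hvb).preconnected
    ⟨b, Or.inl hb, end_mem_support _, hvb.symm⟩).preconnected

theorem IsCutFree.union_ear {B : Set V} (hB : IsCutFree G B) {a b u w : V} (ha : a ∈ B)
    (hb : b ∈ B) (hab : a ≠ b) (hau : G.Adj a u) (hwb : G.Adj w b) {p : G.Walk u w}
    (hp : p.IsPath) (hpB : ∀ x ∈ p.support, x ∉ B) :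
    IsCutFree G (B ∪ {x | x ∈ p.support}) := by
  have hW : (cons hau (p.concat hwb)).IsPath := by
    refine (cons_isPath_iff _ _).2 ⟨(concat_isPath_iff hwb).2 ⟨hp, fun h => hpB b h hb⟩, ?_⟩
    simpa [support_concat] using ⟨fun h => hpB a h ha, hab⟩
  have hWB : ∀ x ∈ (cons hau (p.concat hwb)).support, x ∈ B → x = a ∨ x = b := by
    intro x hx hxB
    simp only [support_cons, support_concat, List.mem_cons, List.mem_append] at hx
    grind
  convert hB.union_support_of_isPath ha hb hab hW hWB using 1
  ext x
  simp only [Set.mem_union, Set.mem_ofPred_eq, support_cons, support_concat, List.mem_cons,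
    List.mem_append]
  grind

theorem IsBlock.exists_separates {B : Set V} (hB : IsBlock G B) {w : V} (hw : w ∉ B) :
    ∃ v ∈ B, ∀ b ∈ B, Separates G v w b := by
  classical
  by_cases hreach : ∃ b ∈ B, G.Reachable w b
  swap
  · obtain ⟨v, hv⟩ := hB.1.1
    exact ⟨v, hv, fun b hb p => absurd ⟨b, hb, p.reachable⟩ hreach⟩
  obtain ⟨b₀, hb₀, ⟨p₀⟩⟩ := hreach
  obtain ⟨v, hv, -, u, huv, q, hq⟩ := p₀.exists_walk_outside_adj_mem_support hw hb₀
  refine ⟨v, hv, fun b hb p => by_contra fun hvp => ?_⟩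
  obtain ⟨b', hb', hb'p, u', hu'b', q', hq'⟩ := p.exists_walk_outside_adj_mem_support hw hb
  -- The two entries into `B`, at `v` and at `b' ≠ v`, are joined by an ear outside `B`.
  set ear := (q.reverse.append q').bypass
  have hearB : ∀ x ∈ ear.support, x ∉ B := fun x hx => by
    have := support_bypass_subset_support _ hx
    simp only [mem_support_append_iff, support_reverse, List.mem_reverse] at this
    exact this.elim (hq x) (hq' x)
  have hB' := hB.1.union_ear hv hb' (fun h => hvp (h ▸ hb'p)) huv.symm hu'b'
    (bypass_isPath _) hearB
  have hu : u ∈ B := hB.2 _ Set.subset_union_left hB' ▸ Or.inr ear.start_mem_support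
  exact hq u q.end_mem_support hu

theorem exists_isBlock_mem_mem_of_isPath [Finite V] {v w : V} (p : G.Walk w v)
    (hp : p.IsPath) (hsep : ∀ x, x ≠ w → x ≠ v → ¬Separates G x w v) :
    ∃ B, IsBlock G B ∧ w ∈ B ∧ v ∈ B := by
  induction p with
  | nil =>
    obtain ⟨B, hsub, hB⟩ := (isCutFree_singleton (G := G) _).exists_isBlock_superset
    exact ⟨B, hB, hsub rfl, hsub rfl⟩
  | @cons w pn v h t ih =>
    obtain ⟨ht, hwt⟩ := (cons_isPath_iff h t).1 hp
    by_cases hpn : pn = v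
    · subst hpn
      obtain ⟨B, hsub, hB⟩ := (isCutFree_pair h).exists_isBlock_superset
      exact ⟨B, hB, hsub (by simp), hsub (by simp)⟩
    obtain ⟨B, hB, hpnB, hvB⟩ := ih ht fun x hxpn hxv hx => by
      by_cases hxw : x = w
      · exact hwt (hxw ▸ hx t)
      · refine hsep x hxw hxv fun q => ?_
        simpa [hxpn] using hx (cons h.symm q)
    by_cases hwB : w ∈ B
    · exact ⟨B, hB, hwB, hvB⟩
    -- The edge `w pn` is a walk into `B`, so `pn` separates `w` from `B`, hence from `v ∈ B`.
    obtain ⟨s, hsB, hs⟩ := hB.exists_separates hwB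
    have hspn : s = pn := by
      have := hs pn hpnB h.toWalk
      simp only [Adj.toWalk, support_cons, support_nil, List.mem_cons, List.not_mem_nil] at this
      grind
    subst hspn
    exact absurd (hs v hvB) (hsep s (fun h => hwB (h ▸ hsB)) hpn)

end Blocks

section Center

variable {V : Type*} {G : SimpleGraph V}

theorem dist_add_dist_le_of_separates {v w u : V} (hr : G.Reachable w u)
    (h : Separates G v w u) : G.dist w v + G.dist v u ≤ G.dist w u := by
  classical
  obtain ⟨p, hp⟩ := hr.exists_walk_length_eq_dist
  calc G.dist w v + G.dist v u
      ≤ (p.takeUntil v (h p)).length + (p.dropUntil v (h p)).length :=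
        add_le_add (dist_le _) (dist_le _)
    _ = G.dist w u := by rw [← length_append, take_spec, hp]

theorem not_separates_farthest_of_mem_sCenter (hG : G.Connected) {S : Finset V} {v z u : V}
    (hz : z ∈ sCenter G S) (hzv : z ≠ v) (hu : u ∈ S) (hvu : G.dist v u = sEcc G S v) :
    ¬Separates G v z u := fun h => by
  have hsum := dist_add_dist_le_of_separates (hG z u) h
  have hzu : G.dist z u ≤ sEcc G S z := Finset.le_sup (f := G.dist z) hu
  have hpos := hG.pos_dist_of_ne hzv
  have hcenter := hz v
  -- `d(z,u) ≥ d(z,v) + d(v,u) > e_S(v) ≥ e_S(z) ≥ d(z,u)`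
  omega

theorem not_separates_of_mem_sCenter (hG : G.Connected) {S : Finset V}
    (hS : S.Nonempty) {v w₁ w₂ : V} (h₁ : w₁ ∈ sCenter G S) (h₂ : w₂ ∈ sCenter G S)
    (hv₁ : w₁ ≠ v) (hv₂ : w₂ ≠ v) : ¬Separates G v w₁ w₂ := by
  obtain ⟨u, hu, hvu⟩ := Finset.exists_mem_eq_sup S hS (G.dist v)
  obtain ⟨p₁, hp₁⟩ := not_forall.1 (not_separates_farthest_of_mem_sCenter hG h₁ hv₁ hu hvu.symm)
  obtain ⟨p₂, hp₂⟩ := not_forall.1 (not_separates_farthest_of_mem_sCenter hG h₂ hv₂ hu hvu.symm)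
  exact fun h => by simpa [hp₁, hp₂] using h (p₁.append p₂.reverse)

end Center

/-- For any connected graph `G` and any nonempty set `S` of vertices, the `S`-center of `G`
is contained in a single block of `G`. -/
theorem sCenter_subset_block {V : Type*} [Fintype V] (G : SimpleGraph V)
    (hG : G.Connected) (S : Finset V) (hS : S.Nonempty) :
    ∃ B : Set V, IsBlock G B ∧ sCenter G S ⊆ B := by
  set C := sCenter G S
  have ⟨s, _⟩ := hS
  obtain ⟨B₀, -, hB₀⟩ := (isCutFree_singleton (G := G) s).exists_isBlock_superset
  obtain ⟨B, hB, hmax⟩ := Set.Finite.exists_maximalFor (· ∩ C) {B | IsBlock G B}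
    (Set.toFinite _) ⟨B₀, hB₀⟩
  refine ⟨B, hB, fun w hw => by_contra fun hwB => ?_⟩
  obtain ⟨v, hvB, hsep⟩ := hB.exists_separates hwB
  have hBC : B ∩ C ⊆ {v} := fun c ⟨hcB, hc⟩ => by_contra fun hcv =>
    not_separates_of_mem_sCenter hG hS hw hc (fun h => hwB (h ▸ hvB)) hcv (hsep c hcB)
  obtain ⟨B₂, hB₂, hwB₂, hvB₂⟩ : ∃ B₂, IsBlock G B₂ ∧ w ∈ B₂ ∧ (v ∈ C → v ∈ B₂) := by
    by_cases hv : v ∈ C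
    · obtain ⟨p, hp⟩ := (hG w v).exists_isPath
      obtain ⟨B₂, hB₂, hw₂, hv₂⟩ := exists_isBlock_mem_mem_of_isPath p hp fun x hxw hxv =>
        not_separates_of_mem_sCenter hG hS hw hv (Ne.symm hxw) (Ne.symm hxv)
      exact ⟨B₂, hB₂, hw₂, fun _ => hv₂⟩
    · obtain ⟨B₂, hsub, hB₂⟩ := (isCutFree_singleton (G := G) w).exists_isBlock_superset
      exact ⟨B₂, hB₂, hsub rfl, fun h => absurd h hv⟩
  have hsub : B ∩ C ⊆ B₂ ∩ C := fun c hc => by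
    obtain rfl := hBC hc
    exact ⟨hvB₂ hc.2, hc.2⟩
  exact hwB (hmax hB₂ hsub ⟨hwB₂, hw⟩).1
end

section
/- In a tree T = (V,E), a set A ⊆ V is a center set if and only if A = {u} for some vertex u, or A = {u,v} for some edge uv ∈ E. -/
/-- `A` is a center set of `G` if it is the `S`-center for some nonempty set `S`. -/
def IsCenterSet {V : Type*} (G : SimpleGraph V) (A : Set V) : Prop :=
  ∃ S : Finset V, S.Nonempty ∧ sCenter G S = A

/-!
The center of a tree is a clique, and trees are triangle-free. If two center vertices `u`, `v`
were not adjacent, the neighbour `w` of `u` on the path to `v` would have smaller `S`-eccentricity: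
for `x ∈ S`, either `w` is closer to `x` than `u` is, or `x` lies on the `u`-side of the edge `uw`,
and then the path from `x` to `v` runs through `u` and `w`, so `d(w, x) < d(v, x)`.
Conversely, `{u}` and `{u, v}` are their own centers.
-/

namespace SimpleGraph

variable {V : Type*} {G : SimpleGraph V} {u v w x y : V}

lemma Walk.dist_add_dist_le_length_of_mem_support (p : G.Walk x y) (hu : u ∈ p.support) :
    G.dist x u + G.dist u y ≤ p.length := by
  classical
  calc G.dist x u + G.dist u y ≤ (p.takeUntil u hu).length + (p.dropUntil u hu).length :=
        add_le_add (dist_le _) (dist_le _)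
    _ = p.length := by rw [← Walk.length_append, Walk.take_spec]

lemma Reachable.exists_adj_dist_lt (h : G.Reachable u v) (huv : u ≠ v) :
    ∃ w, G.Adj u w ∧ G.dist w v < G.dist u v := by
  obtain ⟨p, hp⟩ := h.exists_walk_length_eq_dist
  have hnil : ¬ p.Nil := Walk.not_nil_of_ne huv
  refine ⟨p.snd, p.adj_snd hnil, ?_⟩
  rw [← hp, ← p.length_tail_add_one hnil]
  exact Nat.lt_succ_of_le (dist_le _)

lemma Reachable.deleteEdges_of_dist_lt (h : G.Reachable x u) (hlt : G.dist x u < G.dist x w) :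
    (G.deleteEdges {s(u, w)}).Reachable x u := by
  obtain ⟨p, hp⟩ := h.exists_walk_length_eq_dist
  refine reachable_deleteEdges_iff_exists_walk.mpr ⟨p, fun he => ?_⟩
  have := p.dist_add_dist_le_length_of_mem_support (p.snd_mem_support_of_mem_edges he)
  omega

/-- Vertices on opposite sides of the bridge `uw` are joined only through it. -/
lemma IsTree.dist_eq_dist_add_dist_of_adj (hG : G.IsTree) (huw : G.Adj u w)
    (hx : G.dist x u < G.dist x w) (hy : G.dist y w < G.dist y u) :
    G.dist x y = G.dist x u + G.dist u y := by
  refine le_antisymm hG.connected.dist_triangle ?_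
  obtain ⟨p, hp⟩ := (hG.connected x y).exists_walk_length_eq_dist
  have hxu := (hG.connected x u).deleteEdges_of_dist_lt hx
  have hyw := (hG.connected y w).deleteEdges_of_dist_lt hy
  rw [Sym2.eq_swap] at hyw
  have hbridge : ¬ (G.deleteEdges {s(u, w)}).Reachable u w :=
    isAcyclic_iff_forall_adj_isBridge.mp hG.isAcyclic huw
  have he : s(u, w) ∈ p.edges := p.mem_edges_of_not_reachable_deleteEdges
    fun hxy => hbridge (hxu.symm.trans (hxy.trans hyw))
  rw [← hp]
  exact p.dist_add_dist_le_length_of_mem_support (p.fst_mem_support_of_mem_edges he)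

lemma IsClique.eq_singleton_or_eq_pair {A : Set V} (hG : G.CliqueFree 3) (hA : G.IsClique A)
    (hne : A.Nonempty) : (∃ u, A = {u}) ∨ ∃ u v, G.Adj u v ∧ A = {u, v} := by
  obtain ⟨u, hu⟩ := hne
  by_cases hsingle : ∀ v ∈ A, v = u
  · exact Or.inl ⟨u, Set.eq_singleton_iff_unique_mem.mpr ⟨hu, hsingle⟩⟩
  push Not at hsingle
  obtain ⟨v, hv, hvu⟩ := hsingle
  refine Or.inr ⟨u, v, hA hu hv hvu.symm, Set.Subset.antisymm (fun z hz => ?_) ?_⟩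
  · classical
    by_contra hz'
    simp only [Set.mem_insert_iff, Set.mem_singleton_iff, not_or] at hz'
    exact hG {u, v, z} (is3Clique_triple_iff.mpr
      ⟨hA hu hv hvu.symm, hA hu hz (Ne.symm hz'.1), hA hv hz (Ne.symm hz'.2)⟩)
  · exact Set.insert_subset hu (Set.singleton_subset_iff.mpr hv)

variable {S : Finset V}

lemma dist_le_sEcc {x : V} (hx : x ∈ S) : G.dist v x ≤ sEcc G S v :=
  Finset.le_sup (f := (G.dist v ·)) hx

lemma sEcc_pair [DecidableEq V] (w : V) : sEcc G {u, v} w = max (G.dist w u) (G.dist w v) := by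
  simp [sEcc]

lemma sCenter_nonempty [Finite V] [Nonempty V] (G : SimpleGraph V) (S : Finset V) :
    (sCenter G S).Nonempty :=
  Finite.exists_min (sEcc G S)

lemma sCenter_singleton (hG : G.Connected) (u : V) : sCenter G {u} = {u} := by
  ext v
  simp only [sCenter, sEcc, Finset.sup_singleton, Set.mem_ofPred_eq, Set.mem_singleton_iff]
  refine ⟨fun h => hG.dist_eq_zero_iff.mp (Nat.le_zero.mp ?_), fun h w => by simp [h]⟩
  simpa using h u

lemma IsTree.sCenter_pair [DecidableEq V] (hG : G.IsTree) (huv : G.Adj u v) :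
    sCenter G {u, v} = {u, v} := by
  have hside : ∀ w, G.dist w u = G.dist w v + 1 ∨ G.dist w v = G.dist w u + 1 :=
    fun w => hG.dist_eq_dist_add_one_of_adj w huv
  have huv1 : G.dist u v = 1 := dist_eq_one_iff_adj.mpr huv
  have hvu1 : G.dist v u = 1 := dist_eq_one_iff_adj.mpr huv.symm
  ext w
  simp only [sCenter, sEcc_pair, Set.mem_ofPred_eq, Set.mem_insert_iff, Set.mem_singleton_iff]
  constructor
  · intro h
    have := h u
    simp only [dist_self, huv1] at this
    rcases hside w with hw | hw
    · exact Or.inr (hG.connected.dist_eq_zero_iff.mp (by omega))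
    · exact Or.inl (hG.connected.dist_eq_zero_iff.mp (by omega))
  · rintro (rfl | rfl) y <;> rcases hside y with hy | hy <;> simp [huv1, hvu1] <;> omega

lemma IsTree.isClique_sCenter (hG : G.IsTree) (hS : S.Nonempty) : G.IsClique (sCenter G S) := by
  intro u hu v hv huv
  by_contra hnadj
  have h2 : 1 < G.dist u v := hG.connected.one_lt_dist_of_ne_of_not_adj huv hnadj
  obtain ⟨w, huw, hwv⟩ := (hG.connected u v).exists_adj_dist_lt huv
  have hecc : sEcc G S u = sEcc G S v := le_antisymm (hu v) (hv u)
  have hclose : ∀ x ∈ S, G.dist w x < sEcc G S u := by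
    intro x hx
    have hux : G.dist x u ≤ sEcc G S u := by rw [dist_comm]; exact dist_le_sEcc hx
    have hvx : G.dist x v ≤ sEcc G S u := by rw [dist_comm, hecc]; exact dist_le_sEcc hx
    rw [dist_comm]
    rcases hG.dist_eq_dist_add_one_of_adj x huw with hxu | hxw
    · omega
    · have hvw : G.dist v w < G.dist v u := by
        rwa [dist_comm, dist_comm (u := v)]
      have := hG.dist_eq_dist_add_dist_of_adj (x := x) huw (by omega) hvw
      omega
  obtain ⟨x, hx⟩ := hS
  have hpos : ⊥ < sEcc G S u := Nat.zero_lt_of_lt (hclose x hx)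
  exact (hu w).not_gt ((Finset.sup_lt_iff hpos).mpr hclose)

end SimpleGraph

open SimpleGraph

/-- In a tree `T`, the center sets are exactly the singletons `{u}` and the pairs `{u, v}`
with `uv` an edge of `T`. -/
theorem centerSets_of_tree {V : Type*} [Fintype V] (T : SimpleGraph V)
    (hT : T.IsTree) (A : Set V) :
    IsCenterSet T A ↔
      (∃ u : V, A = {u}) ∨ (∃ u v : V, T.Adj u v ∧ A = {u, v}) := by
  constructor
  · rintro ⟨S, hS, rfl⟩
    have : Nonempty V := ⟨hS.choose⟩
    exact (hT.isClique_sCenter hS).eq_singleton_or_eq_pair (hT.isAcyclic.cliqueFree le_rfl)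
      (sCenter_nonempty T S)
  · rintro (⟨u, rfl⟩ | ⟨u, v, huv, rfl⟩)
    · exact ⟨{u}, Finset.singleton_nonempty u, sCenter_singleton hT.connected u⟩
    · classical
      exact ⟨{u, v}, Finset.insert_nonempty u {v}, hT.sCenter_pair huv⟩
end

section
/- Let K_{m,n} be the complete bipartite graph with parts X and Y, |X| = m > 1, |Y| = n > 1. A set A of vertices is a center set if and only if A is one of: the whole vertex set X ∪ Y, the part X, the part Y, a singleton {v}, or a pair {x,y} with x ∈ X and y ∈ Y. -/
open Sum SimpleGraph

set_option linter.unusedSectionVars false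

lemma pick_ne {α : Type*} {a b : α} (h : a ≠ b) (P : α → Prop) (ha : P a) (hb : P b)
    (x : α) : ∃ c, c ≠ x ∧ P c := by
  rcases eq_or_ne x a with rfl | h'
  · exact ⟨b, Ne.symm h, hb⟩
  · exact ⟨a, h'.symm, ha⟩

section CBP
variable {X Y : Type*}


lemma cbp_adj (x : X) (y : Y) : (completeBipartiteGraph X Y).Adj (inl x) (inr y) := by simp

lemma dist_inl_inr (x : X) (y : Y) :
    (completeBipartiteGraph X Y).dist (inl x) (inr y) = 1 :=
  dist_eq_one_iff_adj.2 (cbp_adj x y)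

lemma dist_inr_inl (x : X) (y : Y) :
    (completeBipartiteGraph X Y).dist (inr y) (inl x) = 1 :=
  dist_eq_one_iff_adj.2 (cbp_adj x y).symm

lemma dist_inl_inl [Nonempty Y] {x x' : X} (h : x ≠ x') :
    (completeBipartiteGraph X Y).dist (inl x : X ⊕ Y) (inl x') = 2 := by
  obtain ⟨y⟩ := ‹Nonempty Y›
  have hle : (completeBipartiteGraph X Y).dist (inl x : X ⊕ Y) (inl x') ≤ 2 := by
    refine (SimpleGraph.dist_le
      (Walk.cons (cbp_adj x y) (Walk.cons (cbp_adj x' y).symm Walk.nil))).trans ?_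
    simp
  have h0 : (completeBipartiteGraph X Y).dist (inl x : X ⊕ Y) (inl x') ≠ 0 := by
    intro hc
    rcases SimpleGraph.dist_eq_zero_iff_eq_or_not_reachable.mp hc with h' | h'
    · exact h (by simpa using h')
    · exact h' ⟨Walk.cons (cbp_adj x y) (Walk.cons (cbp_adj x' y).symm Walk.nil)⟩
  have h1 : (completeBipartiteGraph X Y).dist (inl x : X ⊕ Y) (inl x') ≠ 1 := by
    intro hc
    have := dist_eq_one_iff_adj.1 hc
    simp at this
  omega

lemma dist_inr_inr [Nonempty X] {y y' : Y} (h : y ≠ y') :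
    (completeBipartiteGraph X Y).dist (inr y : X ⊕ Y) (inr y') = 2 := by
  obtain ⟨x⟩ := ‹Nonempty X›
  have hle : (completeBipartiteGraph X Y).dist (inr y : X ⊕ Y) (inr y') ≤ 2 := by
    refine (SimpleGraph.dist_le
      (Walk.cons (cbp_adj x y).symm (Walk.cons (cbp_adj x y') Walk.nil))).trans ?_
    simp
  have h0 : (completeBipartiteGraph X Y).dist (inr y : X ⊕ Y) (inr y') ≠ 0 := by
    intro hc
    rcases SimpleGraph.dist_eq_zero_iff_eq_or_not_reachable.mp hc with h' | h'
    · exact h (by simpa using h')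
    · exact h' ⟨Walk.cons (cbp_adj x y).symm (Walk.cons (cbp_adj x y') Walk.nil)⟩
  have h1 : (completeBipartiteGraph X Y).dist (inr y : X ⊕ Y) (inr y') ≠ 1 := by
    intro hc
    have := dist_eq_one_iff_adj.1 hc
    simp at this
  omega

lemma dist_le_two [Nonempty X] [Nonempty Y] (v w : X ⊕ Y) :
    (completeBipartiteGraph X Y).dist v w ≤ 2 := by
  rcases eq_or_ne v w with rfl | h
  · simp [SimpleGraph.dist_self]
  cases v with
  | inl x => cases w with
    | inl x' => exact le_of_eq (dist_inl_inl (by rintro rfl; exact h rfl))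
    | inr y => simp [dist_inl_inr]
  | inr y => cases w with
    | inl x => simp [dist_inr_inl]
    | inr y' => exact le_of_eq (dist_inr_inr (by rintro rfl; exact h rfl))

lemma dist_eq_zero_iff' [Nonempty X] [Nonempty Y] {v w : X ⊕ Y} :
    (completeBipartiteGraph X Y).dist v w = 0 ↔ v = w := by
  constructor
  · intro h
    by_contra hne
    cases v with
    | inl x => cases w with
      | inl x' => rw [dist_inl_inl (by rintro rfl; exact hne rfl)] at h; omega
      | inr y => rw [dist_inl_inr] at h; omega
    | inr y => cases w with
      | inl x => rw [dist_inr_inl] at h; omega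
      | inr y' => rw [dist_inr_inr (by rintro rfl; exact hne rfl)] at h; omega
  · rintro rfl; simp [SimpleGraph.dist_self]

section
variable [Nonempty X] [Nonempty Y] {S : Finset (X ⊕ Y)}
variable [Nonempty X] [Nonempty Y] {S : Finset (X ⊕ Y)}

lemma sEcc_le_two (v : X ⊕ Y) : sEcc (completeBipartiteGraph X Y) S v ≤ 2 :=
  Finset.sup_le fun w _ => dist_le_two v w

lemma le_sEcc_of_mem {v w : X ⊕ Y} (h : w ∈ S) :
    (completeBipartiteGraph X Y).dist v w ≤ sEcc (completeBipartiteGraph X Y) S v :=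
  Finset.le_sup h

lemma sEcc_eq_two_left {x : X} (h : ∃ x', x' ≠ x ∧ inl x' ∈ S) :
    sEcc (completeBipartiteGraph X Y) S (inl x) = 2 := by
  obtain ⟨x', hne, hm⟩ := h
  refine le_antisymm (sEcc_le_two _) ?_
  calc (2 : ℕ) = (completeBipartiteGraph X Y).dist (inl x : X ⊕ Y) (inl x') :=
        (dist_inl_inl hne.symm).symm
    _ ≤ _ := le_sEcc_of_mem hm

lemma sEcc_eq_two_right {y : Y} (h : ∃ y', y' ≠ y ∧ inr y' ∈ S) :
    sEcc (completeBipartiteGraph X Y) S (inr y) = 2 := by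
  obtain ⟨y', hne, hm⟩ := h
  refine le_antisymm (sEcc_le_two _) ?_
  calc (2 : ℕ) = (completeBipartiteGraph X Y).dist (inr y : X ⊕ Y) (inr y') :=
        (dist_inr_inr hne.symm).symm
    _ ≤ _ := le_sEcc_of_mem hm

lemma center_univ_of (h1 : ∀ x : X, ∃ x', x' ≠ x ∧ inl x' ∈ S)
    (h2 : ∀ y : Y, ∃ y', y' ≠ y ∧ inr y' ∈ S) :
    sCenter (completeBipartiteGraph X Y) S = Set.univ := by
  have he : ∀ v, sEcc (completeBipartiteGraph X Y) S v = 2 := by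
    intro v
    cases v with
    | inl x => exact sEcc_eq_two_left (h1 x)
    | inr y => exact sEcc_eq_two_right (h2 y)
  ext v
  simp [sCenter, he]

lemma center_right_of (hS : S.Nonempty) (h1 : ∀ x : X, ∃ x', x' ≠ x ∧ inl x' ∈ S)
    (h2 : ∀ w ∈ S, ∃ x : X, w = inl x) :
    sCenter (completeBipartiteGraph X Y) S = Set.range inr := by
  have heR : ∀ y : Y, sEcc (completeBipartiteGraph X Y) S (inr y) = 1 := by
    intro y
    refine le_antisymm (Finset.sup_le fun w hw => ?_) ?_
    · obtain ⟨x, rfl⟩ := h2 w hw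
      rw [dist_inr_inl]
    · obtain ⟨w, hw⟩ := hS
      obtain ⟨x, rfl⟩ := h2 w hw
      calc (1 : ℕ) = (completeBipartiteGraph X Y).dist (inr y : X ⊕ Y) (inl x) :=
            (dist_inr_inl x y).symm
        _ ≤ _ := le_sEcc_of_mem hw
  have heL : ∀ x : X, sEcc (completeBipartiteGraph X Y) S (inl x) = 2 := fun x =>
    sEcc_eq_two_left (h1 x)
  ext v
  cases v with
  | inl x =>
    simp only [sCenter, Set.mem_setOf_eq, Set.mem_range]
    constructor
    · intro hmem
      have := hmem (inr (Classical.arbitrary Y))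
      rw [heL, heR] at this
      omega
    · rintro ⟨y, hy⟩; exact absurd hy (by simp)
  | inr y =>
    simp only [sCenter, Set.mem_setOf_eq, Set.mem_range]
    constructor
    · intro _; exact ⟨y, rfl⟩
    · intro _ w
      rw [heR]
      cases w with
      | inl x => rw [heL]; omega
      | inr y' => rw [heR]

lemma center_left_of (hS : S.Nonempty) (h1 : ∀ y : Y, ∃ y', y' ≠ y ∧ inr y' ∈ S)
    (h2 : ∀ w ∈ S, ∃ y : Y, w = inr y) :
    sCenter (completeBipartiteGraph X Y) S = Set.range inl := by
  have heL : ∀ x : X, sEcc (completeBipartiteGraph X Y) S (inl x) = 1 := by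
    intro x
    refine le_antisymm (Finset.sup_le fun w hw => ?_) ?_
    · obtain ⟨y, rfl⟩ := h2 w hw
      rw [dist_inl_inr]
    · obtain ⟨w, hw⟩ := hS
      obtain ⟨y, rfl⟩ := h2 w hw
      calc (1 : ℕ) = (completeBipartiteGraph X Y).dist (inl x : X ⊕ Y) (inr y) :=
            (dist_inl_inr x y).symm
        _ ≤ _ := le_sEcc_of_mem hw
  have heR : ∀ y : Y, sEcc (completeBipartiteGraph X Y) S (inr y) = 2 := fun y =>
    sEcc_eq_two_right (h1 y)
  ext v
  cases v with
  | inr y =>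
    simp only [sCenter, Set.mem_setOf_eq, Set.mem_range]
    constructor
    · intro hmem
      have := hmem (inl (Classical.arbitrary X))
      rw [heL, heR] at this
      omega
    · rintro ⟨x, hx⟩; exact absurd hx (by simp)
  | inl x =>
    simp only [sCenter, Set.mem_setOf_eq, Set.mem_range]
    constructor
    · intro _; exact ⟨x, rfl⟩
    · intro _ w
      rw [heL]
      cases w with
      | inr y => rw [heR]; omega
      | inl x' => rw [heL]

lemma center_singleton_right_of (y0 : Y) (h1 : ∀ x : X, ∃ x', x' ≠ x ∧ inl x' ∈ S)
    (h2 : ∀ y, inr y ∈ S → y = y0) (h3 : ∃ x, inl x ∈ S) (h4 : inr y0 ∈ S) :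
    sCenter (completeBipartiteGraph X Y) S = {inr y0} := by
  have he0 : sEcc (completeBipartiteGraph X Y) S (inr y0) = 1 := by
    refine le_antisymm (Finset.sup_le fun w hw => ?_) ?_
    · cases w with
      | inl x => rw [dist_inr_inl]
      | inr y => rw [h2 y hw]; simp [SimpleGraph.dist_self]
    · obtain ⟨x, hx⟩ := h3
      calc (1 : ℕ) = (completeBipartiteGraph X Y).dist (inr y0 : X ⊕ Y) (inl x) :=
            (dist_inr_inl x y0).symm
        _ ≤ _ := le_sEcc_of_mem hx
  have heL : ∀ x : X, sEcc (completeBipartiteGraph X Y) S (inl x) = 2 := fun x =>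
    sEcc_eq_two_left (h1 x)
  have heR : ∀ y : Y, y ≠ y0 → sEcc (completeBipartiteGraph X Y) S (inr y) = 2 := by
    intro y hy
    refine le_antisymm (sEcc_le_two _) ?_
    calc (2 : ℕ) = (completeBipartiteGraph X Y).dist (inr y : X ⊕ Y) (inr y0) :=
          (dist_inr_inr hy).symm
      _ ≤ _ := le_sEcc_of_mem h4
  have hpos : ∀ w, 1 ≤ sEcc (completeBipartiteGraph X Y) S w := by
    intro w
    cases w with
    | inl x => rw [heL]; omega
    | inr y =>
      rcases eq_or_ne y y0 with rfl | hy
      · rw [he0]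
      · rw [heR y hy]; omega
  ext v
  simp only [sCenter, Set.mem_setOf_eq, Set.mem_singleton_iff]
  cases v with
  | inl x =>
    constructor
    · intro hmem
      have := hmem (inr y0)
      rw [heL, he0] at this
      omega
    · intro h; exact absurd h (by simp)
  | inr y =>
    rcases eq_or_ne y y0 with rfl | hy
    · simp only [he0]
      exact ⟨fun _ => by trivial, fun _ => hpos⟩
    · constructor
      · intro hmem
        have := hmem (inr y0)
        rw [heR y hy, he0] at this
        omega
      · intro h
        exact absurd h (by simp [hy])

lemma center_singleton_left_of (x0 : X) (h1 : ∀ y : Y, ∃ y', y' ≠ y ∧ inr y' ∈ S)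
    (h2 : ∀ x, inl x ∈ S → x = x0) (h3 : ∃ y, inr y ∈ S) (h4 : inl x0 ∈ S) :
    sCenter (completeBipartiteGraph X Y) S = {inl x0} := by
  have he0 : sEcc (completeBipartiteGraph X Y) S (inl x0) = 1 := by
    refine le_antisymm (Finset.sup_le fun w hw => ?_) ?_
    · cases w with
      | inr y => rw [dist_inl_inr]
      | inl x => rw [h2 x hw]; simp [SimpleGraph.dist_self]
    · obtain ⟨y, hy⟩ := h3
      calc (1 : ℕ) = (completeBipartiteGraph X Y).dist (inl x0 : X ⊕ Y) (inr y) :=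
            (dist_inl_inr x0 y).symm
        _ ≤ _ := le_sEcc_of_mem hy
  have heR : ∀ y : Y, sEcc (completeBipartiteGraph X Y) S (inr y) = 2 := fun y =>
    sEcc_eq_two_right (h1 y)
  have heL : ∀ x : X, x ≠ x0 → sEcc (completeBipartiteGraph X Y) S (inl x) = 2 := by
    intro x hx
    refine le_antisymm (sEcc_le_two _) ?_
    calc (2 : ℕ) = (completeBipartiteGraph X Y).dist (inl x : X ⊕ Y) (inl x0) :=
          (dist_inl_inl hx).symm
      _ ≤ _ := le_sEcc_of_mem h4
  have hpos : ∀ w, 1 ≤ sEcc (completeBipartiteGraph X Y) S w := by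
    intro w
    cases w with
    | inr y => rw [heR]; omega
    | inl x =>
      rcases eq_or_ne x x0 with rfl | hx
      · rw [he0]
      · rw [heL x hx]; omega
  ext v
  simp only [sCenter, Set.mem_setOf_eq, Set.mem_singleton_iff]
  cases v with
  | inr y =>
    constructor
    · intro hmem
      have := hmem (inl x0)
      rw [heR, he0] at this
      omega
    · intro h; exact absurd h (by simp)
  | inl x =>
    rcases eq_or_ne x x0 with rfl | hx
    · simp only [he0]
      exact ⟨fun _ => by trivial, fun _ => hpos⟩
    · constructor
      · intro hmem
        have := hmem (inl x0)
        rw [heL x hx, he0] at this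
        omega
      · intro h
        exact absurd h (by simp [hx])

lemma center_pair_of (x0 : X) (y0 : Y) (h1 : inl x0 ∈ S) (h2 : inr y0 ∈ S)
    (h3 : ∀ w ∈ S, w = inl x0 ∨ w = inr y0) :
    sCenter (completeBipartiteGraph X Y) S = {inl x0, inr y0} := by
  have heA : sEcc (completeBipartiteGraph X Y) S (inl x0) = 1 := by
    refine le_antisymm (Finset.sup_le fun w hw => ?_) ?_
    · rcases h3 w hw with rfl | rfl
      · simp [SimpleGraph.dist_self]
      · rw [dist_inl_inr]
    · calc (1 : ℕ) = (completeBipartiteGraph X Y).dist (inl x0 : X ⊕ Y) (inr y0) :=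
            (dist_inl_inr x0 y0).symm
        _ ≤ _ := le_sEcc_of_mem h2
  have heB : sEcc (completeBipartiteGraph X Y) S (inr y0) = 1 := by
    refine le_antisymm (Finset.sup_le fun w hw => ?_) ?_
    · rcases h3 w hw with rfl | rfl
      · rw [dist_inr_inl]
      · simp [SimpleGraph.dist_self]
    · calc (1 : ℕ) = (completeBipartiteGraph X Y).dist (inr y0 : X ⊕ Y) (inl x0) :=
            (dist_inr_inl x0 y0).symm
        _ ≤ _ := le_sEcc_of_mem h1
  have heL : ∀ x : X, x ≠ x0 → sEcc (completeBipartiteGraph X Y) S (inl x) = 2 := by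
    intro x hx
    refine le_antisymm (sEcc_le_two _) ?_
    calc (2 : ℕ) = (completeBipartiteGraph X Y).dist (inl x : X ⊕ Y) (inl x0) :=
          (dist_inl_inl hx).symm
      _ ≤ _ := le_sEcc_of_mem h1
  have heR : ∀ y : Y, y ≠ y0 → sEcc (completeBipartiteGraph X Y) S (inr y) = 2 := by
    intro y hy
    refine le_antisymm (sEcc_le_two _) ?_
    calc (2 : ℕ) = (completeBipartiteGraph X Y).dist (inr y : X ⊕ Y) (inr y0) :=
          (dist_inr_inr hy).symm
      _ ≤ _ := le_sEcc_of_mem h2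
  have hpos : ∀ w, 1 ≤ sEcc (completeBipartiteGraph X Y) S w := by
    intro w
    cases w with
    | inl x =>
      rcases eq_or_ne x x0 with rfl | hx
      · rw [heA]
      · rw [heL x hx]; omega
    | inr y =>
      rcases eq_or_ne y y0 with rfl | hy
      · rw [heB]
      · rw [heR y hy]; omega
  ext v
  simp only [sCenter, Set.mem_setOf_eq, Set.mem_insert_iff, Set.mem_singleton_iff]
  cases v with
  | inl x =>
    rcases eq_or_ne x x0 with rfl | hx
    · simp only [heA]
      exact ⟨fun _ => Or.inl (by trivial), fun _ => hpos⟩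
    · constructor
      · intro hmem
        have := hmem (inl x0)
        rw [heL x hx, heA] at this
        omega
      · intro h
        rcases h with h | h <;> simp [hx] at h
  | inr y =>
    rcases eq_or_ne y y0 with rfl | hy
    · simp only [heB]
      exact ⟨fun _ => Or.inr (by trivial), fun _ => hpos⟩
    · constructor
      · intro hmem
        have := hmem (inr y0)
        rw [heR y hy, heB] at this
        omega
      · intro h
        rcases h with h | h <;> simp [hy] at h

lemma center_single_of (v0 : X ⊕ Y) (h1 : v0 ∈ S) (h2 : ∀ w ∈ S, w = v0) :
    sCenter (completeBipartiteGraph X Y) S = {v0} := by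
  have he0 : sEcc (completeBipartiteGraph X Y) S v0 = 0 := by
    refine Nat.le_zero.mp (Finset.sup_le fun w hw => ?_)
    rw [h2 w hw]
    simp [SimpleGraph.dist_self]
  have hpos : ∀ v, v ≠ v0 → 1 ≤ sEcc (completeBipartiteGraph X Y) S v := by
    intro v hv
    have hd : (completeBipartiteGraph X Y).dist v v0 ≠ 0 := fun hc =>
      hv (dist_eq_zero_iff'.mp hc)
    have := le_sEcc_of_mem (v := v) h1
    omega
  ext v
  simp only [sCenter, Set.mem_setOf_eq, Set.mem_singleton_iff]
  rcases eq_or_ne v v0 with rfl | hv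
  · simp only [he0]
    exact ⟨fun _ => by trivial, fun _ _ => Nat.zero_le _⟩
  · constructor
    · intro hmem
      have := hmem v0
      have := hpos v hv
      rw [he0] at *
      omega
    · intro h; exact absurd h hv

end
end CBP

/-- In the complete bipartite graph `K_{m,n}` with parts `X`, `Y` of sizes `m, n > 1`, the
center sets are exactly: the whole vertex set, the part `X`, the part `Y`, the singletons,
and the pairs `{x, y}` with `x ∈ X`, `y ∈ Y`. -/
theorem centerSets_of_completeBipartite {X Y : Type*} [Fintype X] [Fintype Y]
    (hm : 1 < Fintype.card X) (hn : 1 < Fintype.card Y) (A : Set (X ⊕ Y)) :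
    IsCenterSet (completeBipartiteGraph X Y) A ↔
      A = Set.univ ∨
      A = Set.range Sum.inl ∨
      A = Set.range Sum.inr ∨
      (∃ v : X ⊕ Y, A = {v}) ∨
      (∃ (x : X) (y : Y), A = {Sum.inl x, Sum.inr y}) := by
  classical
  have hXne : Nonempty X := Fintype.card_pos_iff.mp (by omega)
  have hYne : Nonempty Y := Fintype.card_pos_iff.mp (by omega)
  obtain ⟨x1, x2, hx12⟩ := Fintype.exists_pair_of_one_lt_card hm
  obtain ⟨y1, y2, hy12⟩ := Fintype.exists_pair_of_one_lt_card hn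
  constructor
  · rintro ⟨S, hS, rfl⟩
    by_cases hL2 : ∃ a b : X, a ≠ b ∧ inl a ∈ S ∧ inl b ∈ S
    · obtain ⟨a, b, hab, ha, hb⟩ := hL2
      have h1 : ∀ x : X, ∃ x', x' ≠ x ∧ inl x' ∈ S := fun x =>
        pick_ne hab (fun c => inl c ∈ S) ha hb x
      by_cases hR2 : ∃ a b : Y, a ≠ b ∧ inr a ∈ S ∧ inr b ∈ S
      · obtain ⟨c, d, hcd, hc, hd⟩ := hR2
        exact Or.inl (center_univ_of h1 (fun y =>
          pick_ne hcd (fun e => inr e ∈ S) hc hd y))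
      · by_cases hR1 : ∃ y, inr y ∈ S
        · obtain ⟨y0, hy0⟩ := hR1
          have huniq : ∀ y, inr y ∈ S → y = y0 := by
            intro y hy
            by_contra hne
            exact hR2 ⟨y, y0, hne, hy, hy0⟩
          exact Or.inr (Or.inr (Or.inr (Or.inl ⟨inr y0,
            center_singleton_right_of y0 h1 huniq ⟨a, ha⟩ hy0⟩)))
        · refine Or.inr (Or.inr (Or.inl (center_right_of hS h1 ?_)))
          intro w hw
          cases w with
          | inl x => exact ⟨x, rfl⟩
          | inr y => exact absurd ⟨y, hw⟩ hR1
    · have huL : ∀ a b : X, inl a ∈ S → inl b ∈ S → a = b := by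
        intro a b ha hb
        by_contra h
        exact hL2 ⟨a, b, h, ha, hb⟩
      by_cases hR2 : ∃ a b : Y, a ≠ b ∧ inr a ∈ S ∧ inr b ∈ S
      · obtain ⟨c, d, hcd, hc, hd⟩ := hR2
        have h1 : ∀ y : Y, ∃ y', y' ≠ y ∧ inr y' ∈ S := fun y =>
          pick_ne hcd (fun e => inr e ∈ S) hc hd y
        by_cases hL1 : ∃ x, inl x ∈ S
        · obtain ⟨x0, hx0⟩ := hL1
          exact Or.inr (Or.inr (Or.inr (Or.inl ⟨inl x0,
            center_singleton_left_of x0 h1 (fun x hx => huL x x0 hx hx0) ⟨c, hc⟩ hx0⟩)))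
        · refine Or.inr (Or.inl (center_left_of hS h1 ?_))
          intro w hw
          cases w with
          | inl x => exact absurd ⟨x, hw⟩ hL1
          | inr y => exact ⟨y, rfl⟩
      · have huR : ∀ a b : Y, inr a ∈ S → inr b ∈ S → a = b := by
          intro a b ha hb
          by_contra h
          exact hR2 ⟨a, b, h, ha, hb⟩
        by_cases hL1 : ∃ x, inl x ∈ S
        · obtain ⟨x0, hx0⟩ := hL1
          by_cases hR1 : ∃ y, inr y ∈ S
          · obtain ⟨y0, hy0⟩ := hR1
            refine Or.inr (Or.inr (Or.inr (Or.inr ⟨x0, y0,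
              center_pair_of x0 y0 hx0 hy0 ?_⟩)))
            intro w hw
            cases w with
            | inl x => exact Or.inl (by rw [huL x x0 hw hx0])
            | inr y => exact Or.inr (by rw [huR y y0 hw hy0])
          · refine Or.inr (Or.inr (Or.inr (Or.inl ⟨inl x0,
              center_single_of (inl x0) hx0 ?_⟩)))
            intro w hw
            cases w with
            | inl x => rw [huL x x0 hw hx0]
            | inr y => exact absurd ⟨y, hw⟩ hR1
        · by_cases hR1 : ∃ y, inr y ∈ S
          · obtain ⟨y0, hy0⟩ := hR1
            refine Or.inr (Or.inr (Or.inr (Or.inl ⟨inr y0,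
              center_single_of (inr y0) hy0 ?_⟩)))
            intro w hw
            cases w with
            | inl x => exact absurd ⟨x, hw⟩ hL1
            | inr y => rw [huR y y0 hw hy0]
          · exfalso
            obtain ⟨w, hw⟩ := hS
            cases w with
            | inl x => exact hL1 ⟨x, hw⟩
            | inr y => exact hR1 ⟨y, hw⟩
  · rintro (rfl | rfl | rfl | ⟨v, rfl⟩ | ⟨x, y, rfl⟩)
    · refine ⟨{inl x1, inl x2, inr y1, inr y2}, by simp, center_univ_of ?_ ?_⟩
      · exact fun x => pick_ne hx12 (fun c => inl c ∈ ({inl x1, inl x2, inr y1, inr y2} : Finset (X ⊕ Y))) (by simp) (by simp) x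
      · exact fun y => pick_ne hy12 (fun c => inr c ∈ ({inl x1, inl x2, inr y1, inr y2} : Finset (X ⊕ Y))) (by simp) (by simp) y
    · refine ⟨{inr y1, inr y2}, by simp, center_left_of (by simp) ?_ ?_⟩
      · exact fun y => pick_ne hy12 (fun c => inr c ∈ ({inr y1, inr y2} : Finset (X ⊕ Y))) (by simp) (by simp) y
      · intro w hw
        simp only [Finset.mem_insert, Finset.mem_singleton] at hw
        rcases hw with rfl | rfl
        · exact ⟨y1, rfl⟩
        · exact ⟨y2, rfl⟩
    · refine ⟨{inl x1, inl x2}, by simp, center_right_of (by simp) ?_ ?_⟩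
      · exact fun x => pick_ne hx12 (fun c => inl c ∈ ({inl x1, inl x2} : Finset (X ⊕ Y))) (by simp) (by simp) x
      · intro w hw
        simp only [Finset.mem_insert, Finset.mem_singleton] at hw
        rcases hw with rfl | rfl
        · exact ⟨x1, rfl⟩
        · exact ⟨x2, rfl⟩
    · exact ⟨{v}, Finset.singleton_nonempty v,
        center_single_of v (Finset.mem_singleton_self v)
          (fun w hw => Finset.mem_singleton.mp hw)⟩
    · refine ⟨{inl x, inr y}, by simp, center_pair_of x y (by simp) (by simp) ?_⟩
      intro w hw
      simpa using hw
end

section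
/- Let G = K_n − e where e = xy is a deleted edge, n ≥ 4. A set A of vertices is a center set of G if and only if A is a singleton, V \ {x}, V \ {y}, V \ {x,y}, or V. -/
/-!
In `K_n − e` two distinct vertices are at distance 1, except `x` and `y`, which are at distance 2
through any third vertex. For `S = {v}` the `S`-center is `{v}`. Otherwise every vertex has
`S`-eccentricity at least 1 and a vertex outside `{x, y}` attains 1, so the `S`-center consists of
the vertices whose non-neighbour (if any) is not in `S`: all vertices except `x` when `y ∈ S` and
except `y` when `x ∈ S`. The sets `S = {y, z}, {x, z}, {x, y}, {z, w}` with `z, w ∉ {x, y}` realise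
the four cases; the last one needs `n ≥ 4`.
-/

section
variable {V : Type*} {G : SimpleGraph V} {S : Finset V} {u v z : V}

lemma dist_le_sEcc (hu : u ∈ S) : G.dist v u ≤ sEcc G S v :=
  Finset.le_sup (f := G.dist v) hu

lemma sEcc_le_iff {k : ℕ} : sEcc G S v ≤ k ↔ ∀ u ∈ S, G.dist v u ≤ k :=
  Finset.sup_le_iff

lemma sCenter_singleton (hG : G.Connected) : sCenter G {v} = {v} := by
  ext w
  simp only [sCenter, sEcc, Finset.sup_singleton, Set.mem_ofPred_eq, Set.mem_singleton_iff]
  constructor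
  · intro hw
    exact (hG w v).dist_eq_zero_iff.mp (Nat.le_zero.mp (by simpa using hw v))
  · rintro rfl w
    simp

lemma sCenter_eq_setOf_sEcc_le (hz : z ∈ sCenter G S) :
    sCenter G S = {v | sEcc G S v ≤ sEcc G S z} :=
  Set.ext fun _ => ⟨fun hv => hv z, fun hv w => hv.trans (hz w)⟩

end

namespace SimpleGraph

variable {V : Type*} {x y z u v : V}

abbrev completeMinusEdge (x y : V) : SimpleGraph V :=
  (⊤ : SimpleGraph V).deleteEdges {s(x, y)}

lemma completeMinusEdge_adj : (completeMinusEdge x y).Adj u v ↔ u ≠ v ∧ s(u, v) ≠ s(x, y) := by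
  simp

lemma completeMinusEdge_adj_of_ne (hzx : z ≠ x) (hzy : z ≠ y) (hzv : z ≠ v) :
    (completeMinusEdge x y).Adj z v :=
  completeMinusEdge_adj.mpr ⟨hzv, fun h => by simp_all⟩

lemma completeMinusEdge_connected (hzx : z ≠ x) (hzy : z ≠ y) :
    (completeMinusEdge x y).Connected := by
  refine (connected_iff_exists_forall_reachable _).mpr ⟨z, fun v => ?_⟩
  rcases eq_or_ne z v with rfl | hzv
  · rfl
  · exact (completeMinusEdge_adj_of_ne hzx hzy hzv).reachable

lemma completeMinusEdge_dist_le_one_iff (hxy : x ≠ y) (hzx : z ≠ x) (hzy : z ≠ y) :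
    (completeMinusEdge x y).dist u v ≤ 1 ↔ s(u, v) ≠ s(x, y) := by
  have hreach := completeMinusEdge_connected hzx hzy u v
  rcases eq_or_ne u v with rfl | huv
  · simpa using ⟨fun hx hy => hxy (hx.symm.trans hy), fun hy hx => hxy (hx.symm.trans hy)⟩
  · rw [Nat.le_one_iff_eq_zero_or_eq_one, hreach.dist_eq_zero_iff, dist_eq_one_iff_adj,
      completeMinusEdge_adj]
    simp [huv]

lemma sCenter_completeMinusEdge (hxy : x ≠ y) (hzx : z ≠ x) (hzy : z ≠ y) {S : Finset V}
    (hS : S.Nontrivial) :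
    sCenter (completeMinusEdge x y) S = Set.univ \ {v | ∃ u ∈ S, s(v, u) = s(x, y)} := by
  have hG := completeMinusEdge_connected hzx hzy
  have one_le (w : V) : 1 ≤ sEcc (completeMinusEdge x y) S w := by
    obtain ⟨u, hu, huw⟩ := hS.exists_ne w
    exact ((hG w u).pos_dist_of_ne huw.symm).trans_le (dist_le_sEcc hu)
  have le_one_iff (w : V) : sEcc (completeMinusEdge x y) S w ≤ 1 ↔ ∀ u ∈ S, s(w, u) ≠ s(x, y) := by
    simp only [sEcc_le_iff, completeMinusEdge_dist_le_one_iff hxy hzx hzy]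
  have hz1 : sEcc (completeMinusEdge x y) S z = 1 :=
    le_antisymm ((le_one_iff z).mpr fun u _ h => by simp_all) (one_le z)
  have hz : z ∈ sCenter (completeMinusEdge x y) S := fun w => hz1 ▸ one_le w
  rw [sCenter_eq_setOf_sEcc_le hz, hz1]
  ext v
  simp [le_one_iff]

lemma isCenterSet_completeMinusEdge_univ_diff [DecidableEq V] (hxy : x ≠ y) (hzx : z ≠ x)
    (hzy : z ≠ y) {a b : V} (hab : a ≠ b) {T : Set V}
    (hT : ∀ v, v ∈ T ↔ s(v, a) = s(x, y) ∨ s(v, b) = s(x, y)) :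
    IsCenterSet (completeMinusEdge x y) (Set.univ \ T) := by
  have hS : ({a, b} : Finset V).Nontrivial := by
    rw [Finset.Nontrivial, Finset.coe_pair]
    exact Set.nontrivial_pair hab
  refine ⟨{a, b}, hS.nonempty, ?_⟩
  rw [sCenter_completeMinusEdge hxy hzx hzy hS]
  ext v
  simp [hT]

end SimpleGraph

open SimpleGraph

lemma exists_ne_ne_of_four_le_card {V : Type*} [Fintype V] (h : 4 ≤ Fintype.card V) (x y : V) :
    ∃ z w, z ≠ w ∧ z ≠ x ∧ z ≠ y ∧ w ≠ x ∧ w ≠ y := by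
  classical
  have : 1 < ({x, y}ᶜ : Finset V).card := by
    have := Finset.card_le_two (a := x) (b := y)
    rw [Finset.card_compl]
    omega
  obtain ⟨z, hz, w, hw, hzw⟩ := Finset.one_lt_card.mp this
  simp only [Finset.mem_compl, Finset.mem_insert, Finset.mem_singleton, not_or] at hz hw
  exact ⟨z, w, hzw, hz.1, hz.2, hw.1, hw.2⟩

/-- For `G = K_n − e` (`n ≥ 4`) with deleted edge `e = xy`, the center sets are exactly the
singletons, `V \ {x}`, `V \ {y}`, `V \ {x, y}` and `V`. -/
theorem centerSets_of_completeMinusEdge (n : ℕ) (hn : 4 ≤ n) (x y : Fin n) (hxy : x ≠ y)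
    (A : Set (Fin n)) :
    IsCenterSet ((⊤ : SimpleGraph (Fin n)).deleteEdges {s(x, y)}) A ↔
      (∃ v : Fin n, A = {v}) ∨
      A = Set.univ \ {x} ∨
      A = Set.univ \ {y} ∨
      A = Set.univ \ {x, y} ∨
      A = Set.univ := by
  obtain ⟨z, w, hzw, hzx, hzy, hwx, hwy⟩ :=
    exists_ne_ne_of_four_le_card (by simpa using hn) x y
  have hG := completeMinusEdge_connected hzx hzy
  constructor
  · rintro ⟨S, hS, rfl⟩
    obtain ⟨v, rfl⟩ | hS := hS.exists_eq_singleton_or_nontrivial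
    · exact Or.inl ⟨v, sCenter_singleton hG⟩
    · rw [sCenter_completeMinusEdge hxy hzx hzy hS]
      have hsub : {v | ∃ u ∈ S, s(v, u) = s(x, y)} ⊆ {x, y} := fun v ⟨u, _, h⟩ =>
        Sym2.mem_iff.mp (h ▸ Sym2.mem_mk_left v u)
      rcases Set.subset_pair_iff_eq.mp hsub with h | h | h | h <;> rw [h] <;> simp
  · rintro (⟨v, rfl⟩ | rfl | rfl | rfl | rfl)
    · exact ⟨{v}, Finset.singleton_nonempty v, sCenter_singleton hG⟩
    · exact isCenterSet_completeMinusEdge_univ_diff hxy hzx hzy hzy.symm fun v => by simp; grind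
    · exact isCenterSet_completeMinusEdge_univ_diff hxy hzx hzy hzx.symm fun v => by simp; grind
    · exact isCenterSet_completeMinusEdge_univ_diff hxy hzx hzy hxy fun v => by simp; grind
    · simpa using isCenterSet_completeMinusEdge_univ_diff (T := ∅) hxy hzx hzy hzw fun v => by
        simp; grind
end

section
/- In the odd cycle C_{2n+1}, every center set A satisfies |A| ≤ n or |A| = 2n+1. -/
/-!
Let `a` be central with `S`-eccentricity `m`, and let `x ∈ S` be at distance `m` from `a`.
If some vertex is not central then `m < n`. One or two steps from `a` away from `x` lead to
vertices whose two arcs to `x` have lengths `m + j` and `2n + 1 - m - j` (`j = 1, 2`), both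
larger than `m`, so these vertices are not central. Hence every central vertex is followed, in
one of the two directions, by two non-central ones, and `a ↦ a ± 1` injects the center into its
complement, which gives `|A| ≤ n`.
-/

open SimpleGraph

theorem Set.ncard_le_ncard_compl_of_gap {G : Type*} [AddGroup G] [Finite G] {A : Set G} (g : G)
    (hA : ∀ a ∈ A, (a + g ∉ A ∧ a + g + g ∉ A) ∨ (a - g ∉ A ∧ a - g - g ∉ A)) :
    A.ncard ≤ Aᶜ.ncard := by
  classical
  refine Set.ncard_le_ncard_of_injOn (fun a => if a + g ∈ A then a - g else a + g) ?_ ?_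
  · intro a ha
    split_ifs with h
    · exact ((hA a ha).resolve_left fun h' => h'.1 h).1
    · exact h
  · intro a ha b hb hab
    dsimp only at hab
    split_ifs at hab with hag hbg hbg
    · exact sub_left_injective hab
    · have hb' : b = a - g - g := eq_sub_of_add_eq hab.symm
      exact absurd (hb' ▸ hb) ((hA a ha).resolve_left fun h => h.1 hag).2
    · have ha' : a = b - g - g := eq_sub_of_add_eq hab
      exact absurd (ha' ▸ ha) ((hA b hb).resolve_left fun h => h.1 hbg).2
    · exact add_left_injective g hab

namespace SimpleGraph

theorem cycleGraph_dist_le_val_sub {N : ℕ} (u v : Fin (N + 1)) :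
    (cycleGraph (N + 1)).dist u v ≤ (v - u).val := by
  induction h : (v - u).val generalizing u with
  | zero => simp [show u = v by zify at h; fin_omega]
  | succ k ih =>
    have h1 : (1 : Fin (N + 1)).val = 1 := by
      rw [Fin.val_one']; exact Nat.mod_eq_of_lt (by omega)
    have hadj : (cycleGraph (N + 1)).Adj u (u + 1) := by
      rw [cycleGraph_adj']; right; zify at *; fin_omega
    calc (cycleGraph (N + 1)).dist u v
        ≤ (cycleGraph (N + 1)).dist u (u + 1) + (cycleGraph (N + 1)).dist (u + 1) v :=
          cycleGraph_connected.dist_triangle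
      _ ≤ 1 + k := by
          rw [dist_eq_one_iff_adj.mpr hadj]
          exact Nat.add_le_add_left (ih _ (by zify at *; fin_omega)) 1
      _ = k + 1 := Nat.add_comm 1 k

theorem Walk.min_val_sub_le_length_of_cycleGraph {N : ℕ} {u v : Fin (N + 1)}
    (p : (cycleGraph (N + 1)).Walk u v) : min (u - v).val (v - u).val ≤ p.length := by
  induction p with
  | nil => simp
  | cons h p ih =>
    rw [cycleGraph_adj'] at h
    rw [Walk.length_cons]
    zify at *; fin_omega

theorem cycleGraph_dist {N : ℕ} (u v : Fin (N + 1)) :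
    (cycleGraph (N + 1)).dist u v = min (u - v).val (v - u).val := by
  refine le_antisymm (le_min ?_ (cycleGraph_dist_le_val_sub u v)) ?_
  · rw [dist_comm]; exact cycleGraph_dist_le_val_sub v u
  · obtain ⟨p, hp⟩ := cycleGraph_connected.exists_walk_length_eq_dist u v
    exact hp ▸ p.min_val_sub_le_length_of_cycleGraph

theorem cycleGraph_dist_le (n : ℕ) (u v : Fin (2 * n + 1)) :
    (cycleGraph (2 * n + 1)).dist u v ≤ n := by
  rw [cycleGraph_dist]; zify; fin_omega

theorem cycleGraph_dist_lt_dist_add_or_sub {n : ℕ} {a x : Fin (2 * n + 1)}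
    (h : (cycleGraph (2 * n + 1)).dist a x < n) :
    let d := (cycleGraph (2 * n + 1)).dist
    (d a x < d (a + 1) x ∧ d a x < d (a + 1 + 1) x) ∨
      (d a x < d (a - 1) x ∧ d a x < d (a - 1 - 1) x) := by
  have h1 : (1 : Fin (2 * n + 1)).val = 1 := by
    rw [Fin.val_one']; exact Nat.mod_eq_of_lt (by omega)
  have h2 : (1 + 1 : Fin (2 * n + 1)).val = 2 := by
    rw [Fin.val_add, h1]; exact Nat.mod_eq_of_lt (by omega)
  simp only [cycleGraph_dist, add_assoc, sub_sub] at h ⊢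
  -- `fin_omega` cannot see through the nested sums `a + 1 + 1`
  generalize (1 + 1 : Fin (2 * n + 1)) = t at h2 ⊢
  rcases min_choice (a - x).val (x - a).val with hmin | hmin <;> rw [hmin] at h ⊢ <;> clear hmin
  · left; constructor <;> apply lt_min <;> zify at * <;> fin_omega
  · right; constructor <;> apply lt_min <;> zify at * <;> fin_omega

end SimpleGraph

section Center

variable {V : Type*} {G : SimpleGraph V} {S : Finset V} {a b x : V}

theorem sEcc_lt_of_mem_sCenter_of_notMem (ha : a ∈ sCenter G S) (hb : b ∉ sCenter G S) :
    sEcc G S a < sEcc G S b := by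
  obtain ⟨w, hw⟩ : ∃ w, sEcc G S w < sEcc G S b := by simpa [sCenter] using hb
  exact (ha w).trans_lt hw

theorem notMem_sCenter_of_sEcc_lt_dist (hx : x ∈ S)
    (h : sEcc G S a < G.dist b x) : b ∉ sCenter G S := fun hb =>
  (h.trans_le (Finset.le_sup (f := fun x => G.dist b x) hx)).not_ge (hb a)

end Center

theorem sCenter_cycleGraph_gap {n : ℕ} {S : Finset (Fin (2 * n + 1))} (hS : S.Nonempty)
    {a z : Fin (2 * n + 1)} (ha : a ∈ sCenter (cycleGraph (2 * n + 1)) S)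
    (hz : z ∉ sCenter (cycleGraph (2 * n + 1)) S) :
    let C := sCenter (cycleGraph (2 * n + 1)) S
    (a + 1 ∉ C ∧ a + 1 + 1 ∉ C) ∨ (a - 1 ∉ C ∧ a - 1 - 1 ∉ C) := by
  obtain ⟨x, hx, hax⟩ : ∃ x ∈ S, sEcc (cycleGraph (2 * n + 1)) S a =
      (cycleGraph (2 * n + 1)).dist a x := S.exists_mem_eq_sup hS _
  have hn : (cycleGraph (2 * n + 1)).dist a x < n :=
    hax ▸ (sEcc_lt_of_mem_sCenter_of_notMem ha hz).trans_le
      (Finset.sup_le fun y _ => cycleGraph_dist_le n z y)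
  have far (b) (hb : (cycleGraph (2 * n + 1)).dist a x < (cycleGraph (2 * n + 1)).dist b x) :=
    notMem_sCenter_of_sEcc_lt_dist hx (hax ▸ hb)
  rcases cycleGraph_dist_lt_dist_add_or_sub hn with ⟨h₁, h₂⟩ | ⟨h₁, h₂⟩
  exacts [.inl ⟨far _ h₁, far _ h₂⟩, .inr ⟨far _ h₁, far _ h₂⟩]

theorem card_centerSet_oddCycle_general (n : ℕ) (A : Set (Fin (2 * n + 1)))
    (hA : IsCenterSet (SimpleGraph.cycleGraph (2 * n + 1)) A) :
    A.ncard ≤ n ∨ A.ncard = 2 * n + 1 := by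
  obtain ⟨S, hS, rfl⟩ := hA
  by_cases h : sCenter (cycleGraph (2 * n + 1)) S = Set.univ
  · right
    rw [h, Set.ncard_univ, Nat.card_fin]
  · left
    obtain ⟨z, hz⟩ := (Set.ne_univ_iff_exists_notMem _).mp h
    have hle := Set.ncard_le_ncard_compl_of_gap 1 fun a ha => sCenter_cycleGraph_gap hS ha hz
    have hsum := Set.ncard_add_ncard_compl (sCenter (cycleGraph (2 * n + 1)) S)
    rw [Nat.card_fin] at hsum
    omega

/-- In the odd cycle `C_{2n+1}`, every center set `A` satisfies `|A| ≤ n` or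
`|A| = 2n + 1`. -/
theorem card_centerSet_oddCycle (n : ℕ) (hn : 1 ≤ n) (A : Set (Fin (2 * n + 1)))
    (hA : IsCenterSet (SimpleGraph.cycleGraph (2 * n + 1)) A) :
    A.ncard ≤ n ∨ A.ncard = 2 * n + 1 :=
  card_centerSet_oddCycle_general n A hA
end

section
/- Let G be a symmetric even graph and let S ⊆ V(G) be a dominating set containing no interior vertex (i.e., no vertex x ∈ S with N(x) ⊆ S). Then for S' ⊆ V, C_S(G) = S' if and only if C_{S'}(G) = S. -/
/-- `S` is a dominating set: every vertex is in `S` or adjacent to a vertex of `S`. -/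
def IsDominating {V : Type*} (G : SimpleGraph V) (S : Set V) : Prop :=
  ∀ v : V, v ∈ S ∨ ∃ u ∈ S, G.Adj u v

/-- `S` is a boundary set: no vertex of `S` has all its neighbours inside `S`. -/
def IsBoundarySet {V : Type*} (G : SimpleGraph V) (S : Set V) : Prop :=
  ¬∃ x ∈ S, ∀ y : V, G.Adj x y → y ∈ S

/-- Let `G` be a symmetric even graph (with `bar u` the unique eccentric vertex of `u`)
and let `S` be a dominating set containing no interior vertex.  Then for any `S'`,
`C_S(G) = S'` if and only if `C_{S'}(G) = S`. -/
theorem sCenter_symm_of_dominating_boundary {V : Type*} [Fintype V]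
    (G : SimpleGraph V) (bar : V → V) (hG : G.Connected)
    (hbar : ∀ u : V, G.dist u (bar u) = G.diam ∧
      ∀ w : V, G.dist u w = G.diam → w = bar u)
    (hsym : ∀ u v : V, G.dist u v + G.dist u (bar v) = G.diam)
    (S : Finset V) (hS : S.Nonempty)
    (hdom : IsDominating G ↑S) (hbd : IsBoundarySet G ↑S)
    (S' : Finset V) :
    sCenter G S = ↑S' ↔ sCenter G S' = ↑S := by
  classical
  -- `bar` is an involution
  have hbb : ∀ u : V, bar (bar u) = u := by
    intro u
    have h1 := (hbar u).1
    have h2 := hsym u (bar u)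
    have h0 : G.dist u (bar (bar u)) = 0 := by omega
    exact (hG.dist_eq_zero_iff.mp h0).symm
  -- `bar` preserves distances
  have hbdist : ∀ u v : V, G.dist (bar u) (bar v) = G.dist u v := by
    intro u v
    have h1 := hsym u v
    have h2 := hsym (bar v) (bar u)
    rw [hbb] at h2
    have e1 : G.dist u (bar v) = G.dist (bar v) u := G.dist_comm
    have e2 : G.dist (bar u) (bar v) = G.dist (bar v) (bar u) := G.dist_comm
    omega
  -- `bar` preserves adjacency
  have hbadj : ∀ u v : V, G.Adj u v → G.Adj (bar u) (bar v) := by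
    intro u v h
    rw [← SimpleGraph.dist_eq_one_iff_adj] at h ⊢
    rw [hbdist]; exact h
  -- boundary in useful form
  have hbd' : ∀ x ∈ S, ∃ y : V, G.Adj x y ∧ y ∉ S := by
    intro x hx
    by_contra hcon
    push_neg at hcon
    exact hbd ⟨x, by simpa using hx, fun y hy => by simpa using hcon y hy⟩
  -- eccentricity + inf-distance-to-antipodes = diam
  have ecc_eq : ∀ (T : Finset V) (hT : T.Nonempty) (v : V),
      sEcc G T v + T.inf' hT (fun x => G.dist v (bar x)) = G.diam := by
    intro T hT v
    set m := T.inf' hT (fun x => G.dist v (bar x)) with hm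
    have hmd : m ≤ G.diam := by
      obtain ⟨x, hx⟩ := hT
      have h1 : m ≤ G.dist v (bar x) := Finset.inf'_le _ hx
      have h2 := hsym v x
      omega
    have hle : sEcc G T v ≤ G.diam - m := by
      apply Finset.sup_le
      intro x hx
      have h1 := hsym v x
      have h2 : m ≤ G.dist v (bar x) := Finset.inf'_le _ hx
      omega
    have hge : G.diam ≤ sEcc G T v + m := by
      obtain ⟨x₀, hx₀, he⟩ := Finset.exists_mem_eq_inf' hT (fun x => G.dist v (bar x))
      have h1 := hsym v x₀
      have h2 : G.dist v x₀ ≤ sEcc G T v := Finset.le_sup hx₀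
      omega
    omega
  -- membership in the center, reformulated
  have center_iff : ∀ (T : Finset V) (hT : T.Nonempty) (v : V),
      v ∈ sCenter G T ↔
        ∀ w, T.inf' hT (fun x => G.dist w (bar x)) ≤ T.inf' hT (fun x => G.dist v (bar x)) := by
    intro T hT v
    constructor
    · intro h w
      have h1 := ecc_eq T hT v
      have h2 := ecc_eq T hT w
      have h3 := h w
      omega
    · intro h w
      have h1 := ecc_eq T hT v
      have h2 := ecc_eq T hT w
      have h3 := h w
      omega
  -- inf' = 0 iff v is an antipode of a member
  have hm0 : ∀ (T : Finset V) (hT : T.Nonempty) (v : V),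
      T.inf' hT (fun x => G.dist v (bar x)) = 0 ↔ ∃ x ∈ T, bar x = v := by
    intro T hT v
    constructor
    · intro h
      obtain ⟨x₀, hx₀, he⟩ := Finset.exists_mem_eq_inf' hT (fun x => G.dist v (bar x))
      refine ⟨x₀, hx₀, ?_⟩
      have h0 : G.dist v (bar x₀) = 0 := by omega
      exact (hG.dist_eq_zero_iff.mp h0).symm
    · rintro ⟨x, hx, rfl⟩
      have h1 : T.inf' hT (fun y => G.dist (bar x) (bar y)) ≤ G.dist (bar x) (bar x) :=
        Finset.inf'_le _ hx
      have h2 : G.dist (bar x) (bar x) = 0 := SimpleGraph.dist_self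
      omega
  -- central computation: if the antipodes of `T` dominate and don't cover `V`,
  -- the `T`-center is the complement of the antipode set of `T`.
  have centerA : ∀ (T : Finset V) (hT : T.Nonempty),
      (∀ v, ∃ x ∈ T, G.dist v (bar x) ≤ 1) →
      (∃ v₀, ∀ x ∈ T, bar x ≠ v₀) →
      sCenter G T = {v | ∀ x ∈ T, bar x ≠ v} := by
    intro T hT hdomT hneT
    have hm1 : ∀ v, T.inf' hT (fun x => G.dist v (bar x)) ≤ 1 := by
      intro v
      obtain ⟨x, hx, hdx⟩ := hdomT v
      exact le_trans (Finset.inf'_le _ hx) hdx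
    obtain ⟨v₀, hv₀⟩ := hneT
    have hmv₀ : T.inf' hT (fun x => G.dist v₀ (bar x)) = 1 := by
      have h1 := hm1 v₀
      have h2 : T.inf' hT (fun x => G.dist v₀ (bar x)) ≠ 0 := by
        intro h0
        obtain ⟨x, hx, hxe⟩ := (hm0 T hT v₀).mp h0
        exact hv₀ x hx hxe
      omega
    ext v
    rw [center_iff T hT v]
    simp only [Set.mem_setOf_eq]
    constructor
    · intro h x hx hxe
      have h1 := h v₀
      have h2 : T.inf' hT (fun y => G.dist v (bar y)) = 0 := (hm0 T hT v).mpr ⟨x, hx, hxe⟩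
      omega
    · intro h w
      have h1 : T.inf' hT (fun x => G.dist v (bar x)) ≠ 0 := by
        intro h0
        obtain ⟨x, hx, hxe⟩ := (hm0 T hT v).mp h0
        exact h x hx hxe
      have h2 := hm1 v
      have h3 := hm1 w
      omega
  -- the center of S is the complement of bar '' S
  have hdomS : ∀ v, ∃ x ∈ S, G.dist v (bar x) ≤ 1 := by
    intro v
    rcases hdom (bar v) with h | ⟨u, hu, hadj⟩
    · refine ⟨bar v, by simpa using h, ?_⟩
      rw [hbb, SimpleGraph.dist_self]; omega
    · refine ⟨u, by simpa using hu, ?_⟩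
      have : G.Adj (bar u) (bar (bar v)) := hbadj u (bar v) hadj
      rw [hbb] at this
      have h1 : G.dist (bar u) v = 1 := SimpleGraph.dist_eq_one_iff_adj.mpr this
      rw [G.dist_comm]
      omega
  obtain ⟨xS, hxS⟩ := hS
  obtain ⟨yS, hyadj, hynS⟩ := hbd' xS hxS
  have hneS : ∃ v₀, ∀ x ∈ S, bar x ≠ v₀ := by
    refine ⟨bar yS, fun x hx hxe => ?_⟩
    have : x = yS := by
      have := congrArg bar hxe
      rwa [hbb, hbb] at this
    exact hynS (this ▸ hx)
  have hCS : sCenter G S = {v | ∀ x ∈ S, bar x ≠ v} :=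
    centerA S ⟨xS, hxS⟩ hdomS hneS
  constructor
  · -- forward: sCenter G S = ↑S' → sCenter G S' = ↑S
    intro h
    have memS' : ∀ v, v ∈ S' ↔ ∀ x ∈ S, bar x ≠ v := by
      intro v
      rw [← Finset.mem_coe, ← h, hCS]
      rfl
    have hbymem : ∀ v, v ∉ S → bar v ∈ S' := by
      intro v hv
      rw [memS']
      intro z hz hze
      have : z = v := by
        have := congrArg bar hze
        rwa [hbb, hbb] at this
      exact hv (this ▸ hz)
    have hS' : S'.Nonempty := ⟨bar yS, hbymem yS hynS⟩
    have hdomS' : ∀ v, ∃ x ∈ S', G.dist v (bar x) ≤ 1 := by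
      intro v
      by_cases hv : v ∈ S
      · obtain ⟨y, hyadj', hynS'⟩ := hbd' v hv
        refine ⟨bar y, hbymem y hynS', ?_⟩
        rw [hbb]
        have := SimpleGraph.dist_eq_one_iff_adj.mpr hyadj'
        omega
      · exact ⟨bar v, hbymem v hv, by rw [hbb, SimpleGraph.dist_self]; omega⟩
    have hneS' : ∃ v₀, ∀ x ∈ S', bar x ≠ v₀ := by
      refine ⟨xS, fun x hx hxe => ?_⟩
      have hx' : x = bar xS := by
        have := congrArg bar hxe
        rwa [hbb] at this
      have := (memS' x).mp hx
      exact this xS hxS hx'.symm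
    have hCS' : sCenter G S' = {v | ∀ x ∈ S', bar x ≠ v} :=
      centerA S' hS' hdomS' hneS'
    rw [hCS']
    ext v
    simp only [Set.mem_setOf_eq, Finset.mem_coe]
    constructor
    · intro hv
      by_contra hvnS
      have h1 : bar v ∈ S' := hbymem v hvnS
      exact hv (bar v) h1 (hbb v)
    · intro hv x hx hxe
      have hx' : x = bar v := by
        have := congrArg bar hxe
        rwa [hbb] at this
      have := (memS' x).mp hx
      exact this v hv hx'.symm
  · -- backward: sCenter G S' = ↑S → sCenter G S = ↑S'
    intro h
    -- S' is nonempty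
    have hS' : S'.Nonempty := by
      rcases Finset.eq_empty_or_nonempty S' with he | hne
      · exfalso
        have hall : ∀ v : V, v ∈ S := by
          intro v
          have hv : v ∈ sCenter G S' := by
            intro w
            simp [sEcc, he]
          rw [h] at hv
          simpa using hv
        exact hbd ⟨xS, by simpa using hxS, fun y _ => by simpa using hall y⟩
      · exact hne
    set m' := fun v => S'.inf' hS' (fun x => G.dist v (bar x)) with hm'
    have memS : ∀ v, v ∈ S ↔ ∀ w, m' w ≤ m' v := by
      intro v
      rw [← Finset.mem_coe, ← h]
      exact center_iff S' hS' v
    have hMx : ∀ w, m' w ≤ m' xS := (memS xS).mp hxS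
    -- m' xS ≥ 1
    have hM1 : 1 ≤ m' xS := by
      by_contra hlt
      have hM0 : m' xS = 0 := by omega
      have hall : ∀ v : V, v ∈ S := by
        intro v
        rw [memS]
        intro w
        have := hMx w
        have hv0 : m' v = 0 := by have := hMx v; omega
        omega
      exact hbd ⟨xS, by simpa using hxS, fun y _ => by simpa using hall y⟩
    -- antipodes of S' avoid S
    have hTnotS : ∀ x ∈ S', bar x ∉ S := by
      intro x hx hbx
      have h0 : m' (bar x) = 0 := by
        have h1 : m' (bar x) ≤ G.dist (bar x) (bar x) := Finset.inf'_le _ hx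
        have h2 : G.dist (bar x) (bar x) = 0 := SimpleGraph.dist_self
        omega
      have := (memS (bar x)).mp hbx xS
      omega
    -- m' xS = 1 and all values ≤ 1
    obtain ⟨yT, hyT⟩ := id hS'
    have hbyT : bar yT ∉ S := hTnotS yT hyT
    have hub : ∀ w, m' w ≤ 1 := by
      rcases hdom (bar yT) with hc | ⟨u, hu, hadj⟩
      · exact absurd (by simpa using hc) hbyT
      · have hu' : u ∈ S := by simpa using hu
        have hd1 : G.dist u (bar yT) = 1 := SimpleGraph.dist_eq_one_iff_adj.mpr hadj
        have h1 : m' u ≤ 1 := by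
          have h2 : m' u ≤ G.dist u (bar yT) := Finset.inf'_le _ hyT
          omega
        intro w
        have := (memS u).mp hu' w
        omega
    -- every vertex outside S is an antipode of some member of S'
    have hcompl : ∀ v, v ∉ S → ∃ x ∈ S', bar x = v := by
      intro v hv
      have hv' : ¬∀ w, m' w ≤ m' v := fun hc => hv ((memS v).mpr hc)
      push_neg at hv'
      obtain ⟨w, hw⟩ := hv'
      have h0 : m' v = 0 := by
        have := hub w
        omega
      exact (hm0 S' hS' v).mp h0
    rw [hCS]
    ext v
    simp only [Set.mem_setOf_eq, Finset.mem_coe]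
    constructor
    · intro hv
      have hbvnS : bar v ∉ S := fun hc => hv (bar v) hc (hbb v)
      obtain ⟨x, hx, hxe⟩ := hcompl (bar v) hbvnS
      have hxv : x = v := by
        have := congrArg bar hxe
        rwa [hbb, hbb] at this
      exact hxv ▸ hx
    · intro hv x hx hxe
      have hx' : bar v = x := by
        have h2 := congrArg bar hxe
        rw [hbb] at h2
        exact h2.symm
      exact hTnotS v hv (by rw [hx']; exact hx)
end

section
/- Let G be a symmetric even graph. A nonempty set S ⊆ V(G) is a dominating boundary set if and only if C_S(G) is a dominating boundary set. -/
/-- Let `G` be a symmetric even graph (with `bar u` the unique eccentric vertex of `u`).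
A nonempty set `S` is a dominating boundary set if and only if its center `C_S(G)` is a
dominating boundary set. -/
theorem dominating_boundary_iff_sCenter {V : Type*} [Fintype V]
    (G : SimpleGraph V) (bar : V → V) (hG : G.Connected)
    (hbar : ∀ u : V, G.dist u (bar u) = G.diam ∧
      ∀ w : V, G.dist u w = G.diam → w = bar u)
    (hsym : ∀ u v : V, G.dist u v + G.dist u (bar v) = G.diam)
    (S : Finset V) (hS : S.Nonempty) :
    (IsDominating G ↑S ∧ IsBoundarySet G ↑S) ↔
      (IsDominating G (sCenter G S) ∧ IsBoundarySet G (sCenter G S)) := by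
  set D := G.diam with hD
  -- basic facts
  have hdistle : ∀ u v : V, G.dist u v ≤ D := fun u v => Nat.le.intro (hsym u v)
  have hbar2 : ∀ u : V, bar (bar u) = u := by
    intro u
    exact ((hbar (bar u)).2 u (by rw [G.dist_comm]; exact (hbar u).1)).symm
  have hbardist : ∀ u v : V, G.dist (bar u) (bar v) = G.dist u v := by
    intro u v
    have h1 := hsym (bar u) v
    have h2 := hsym v u
    have h3 : G.dist (bar u) v = G.dist v (bar u) := G.dist_comm ..
    have h4 : G.dist u v = G.dist v u := G.dist_comm ..
    omega
  have hAdj : ∀ u v : V, G.Adj u v → G.Adj (bar u) (bar v) := by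
    intro u v h
    rw [← SimpleGraph.dist_eq_one_iff_adj] at h ⊢
    rw [hbardist]; exact h
  have hEccLe : ∀ v : V, sEcc G S v ≤ D := fun v =>
    Finset.sup_le fun x _ => hdistle v x
  have hEccBar : ∀ x ∈ S, sEcc G S (bar x) = D := by
    intro x hx
    refine le_antisymm (hEccLe _) ?_
    have : G.dist (bar x) x = D := by rw [G.dist_comm]; exact (hbar x).1
    calc D = G.dist (bar x) x := this.symm
    _ ≤ _ := Finset.le_sup (f := fun y => G.dist (bar x) y) hx
  have hEccTop : ∀ v : V, sEcc G S v = D → bar v ∈ S := by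
    intro v hv
    obtain ⟨x, hx, hxe⟩ := Finset.exists_mem_eq_sup S hS (fun x => G.dist v x)
    have : G.dist x v = D := by rw [G.dist_comm, ← hxe, ← hv]; rfl
    have hvx : v = bar x := (hbar x).2 v this
    rwa [hvx, hbar2]
  -- S dominating iff sEcc ≥ D - 1 everywhere
  have hDomIff : IsDominating G ↑S ↔ ∀ v : V, D ≤ sEcc G S v + 1 := by
    constructor
    · intro hdom v
      rcases hdom (bar v) with h | ⟨u, hu, huadj⟩
      · have : G.dist v (bar v) = D := (hbar v).1
        have hle : G.dist v (bar v) ≤ sEcc G S v :=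
          Finset.le_sup (f := fun x => G.dist v x) h
        omega
      · -- u ∈ S adjacent to bar v; then dist v u = D - 1
        have h1 : G.Adj (bar u) v := by
          have := hAdj u (bar v) huadj
          rwa [hbar2] at this
        have h2 : G.dist v (bar u) = 1 :=
          SimpleGraph.dist_eq_one_iff_adj.mpr h1.symm
        have h3 := hsym v u
        have hle : G.dist v u ≤ sEcc G S v :=
          Finset.le_sup (f := fun x => G.dist v x) hu
        omega
    · intro h v
      obtain ⟨x, hx, hxe⟩ := Finset.exists_mem_eq_sup S hS (fun y => G.dist (bar v) y)
      have h0 : sEcc G S (bar v) = G.dist (bar v) x := hxe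
      have h1 : D ≤ G.dist (bar v) x + 1 := by have := h (bar v); omega
      have h2 := hsym (bar v) x
      have h3 : G.dist (bar v) (bar x) = G.dist v x := hbardist v x
      have h4 : G.dist v x ≤ 1 := by omega
      rcases Nat.lt_or_ge (G.dist v x) 1 with h5 | h5
      · have : G.dist v x = 0 := by omega
        have : v = x := (hG.dist_eq_zero_iff).mp this
        exact Or.inl (by rw [this]; exact hx)
      · have : G.dist v x = 1 := le_antisymm h4 h5
        exact Or.inr ⟨x, hx, (SimpleGraph.dist_eq_one_iff_adj.mp this).symm⟩
  constructor
  · rintro ⟨hdom, hbd⟩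
    have hlow : ∀ v : V, D ≤ sEcc G S v + 1 := hDomIff.mp hdom
    -- get a vertex outside S via boundary
    obtain ⟨x₀, hx₀⟩ := hS
    have hpush : ∀ x ∈ S, ∃ y, G.Adj x y ∧ y ∉ S := by
      intro x hx
      by_contra hc
      push_neg at hc
      exact hbd ⟨x, hx, fun y hy => hc y hy⟩
    obtain ⟨y₀, hy₀adj, hy₀⟩ := hpush x₀ hx₀
    -- bar y₀ has sEcc = D - 1
    have hby₀ : sEcc G S (bar y₀) + 1 = D := by
      have h1 : sEcc G S (bar y₀) ≠ D := by
        intro h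
        have := hEccTop _ h
        rw [hbar2] at this
        exact hy₀ this
      have := hEccLe (bar y₀)
      have := hlow (bar y₀)
      omega
    -- characterize center
    have hC : ∀ v : V, v ∈ sCenter G S ↔ bar v ∉ S := by
      intro v
      constructor
      · intro hv hvS
        have h1 : sEcc G S v = D := by
          have := hEccBar (bar v) hvS
          rw [hbar2] at this
          exact this
        have h2 : sEcc G S v ≤ sEcc G S (bar y₀) := hv (bar y₀)
        omega
      · intro hvS w
        have h1 : sEcc G S v ≠ D := fun h => hvS (hEccTop v h)
        have := hEccLe v
        have := hlow v
        have := hlow w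
        omega
    refine ⟨?_, ?_⟩
    · intro v
      by_cases hv : bar v ∈ S
      · obtain ⟨y, hyadj, hyS⟩ := hpush (bar v) hv
        refine Or.inr ⟨bar y, (hC (bar y)).mpr (by rwa [hbar2]), ?_⟩
        have := (hAdj (bar v) y hyadj).symm
        rwa [hbar2] at this
      · exact Or.inl ((hC v).mpr hv)
    · rintro ⟨v, hv, hall⟩
      have hvS : bar v ∉ S := (hC v).mp hv
      rcases hdom (bar v) with h | ⟨u, hu, huadj⟩
      · exact hvS h
      · have h1 : G.Adj v (bar u) := by
          have := hAdj (bar v) u huadj.symm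
          rwa [hbar2] at this
        have := (hC (bar u)).mp (hall (bar u) h1)
        rw [hbar2] at this
        exact this hu
  · rintro ⟨hdom, hbd⟩
    obtain ⟨x₀, hx₀⟩ := hS
    -- minimizer of sEcc
    obtain ⟨v₀, -, hv₀⟩ := Finset.exists_min_image Finset.univ (sEcc G S)
      ⟨x₀, Finset.mem_univ x₀⟩
    have hv₀min : ∀ w : V, sEcc G S v₀ ≤ sEcc G S w := fun w => hv₀ w (Finset.mem_univ w)
    -- key: any vertex whose all closed-neighborhood sEcc exceeds sEcc v₀ kills domination
    have hkill : ∀ z : V, sEcc G S v₀ < sEcc G S z →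
        (∀ y : V, G.Adj z y → sEcc G S v₀ < sEcc G S y) → False := by
      intro z hz hys
      rcases hdom z with h | ⟨u, hu, huadj⟩
      · exact absurd (h v₀) (by omega)
      · exact absurd (hu v₀) (by have := hys u huadj.symm; omega)
    -- sEcc v₀ ≠ D (else center = univ, not a boundary set)
    have hne : sEcc G S v₀ ≠ D := by
      intro h
      have hall : ∀ w : V, w ∈ sCenter G S := by
        intro w w'
        have := hv₀min w
        have := hv₀min w'
        have := hEccLe w
        omega
      exact hbd ⟨x₀, hall x₀, fun y _ => hall y⟩
    -- sEcc v₀ = D - 1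
    have hm : sEcc G S v₀ + 1 = D := by
      by_contra hc
      have h1 : sEcc G S v₀ + 1 < D := by have := hEccLe v₀; omega
      refine hkill (bar x₀) ?_ ?_
      · rw [hEccBar x₀ hx₀]; omega
      · intro y hy
        -- dist y x₀ ≥ D - 1
        have ht : G.dist (bar x₀) x₀ ≤ G.dist (bar x₀) y + G.dist y x₀ :=
          hG.dist_triangle
        have h2 : G.dist (bar x₀) x₀ = D := by rw [G.dist_comm]; exact (hbar x₀).1
        have h3 : G.dist (bar x₀) y = 1 := SimpleGraph.dist_eq_one_iff_adj.mpr hy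
        have h4 : G.dist y x₀ ≤ sEcc G S y :=
          Finset.le_sup (f := fun x => G.dist y x) hx₀
        omega
    refine ⟨?_, ?_⟩
    · refine hDomIff.mpr fun v => ?_
      have := hv₀min v; omega
    · rintro ⟨x, hx, hall⟩
      refine hkill (bar x) ?_ ?_
      · rw [hEccBar x hx]; omega
      · intro y hy
        have h1 : G.Adj x (bar y) := by
          have := hAdj (bar x) y hy
          rwa [hbar2] at this
        have h2 : bar y ∈ S := hall (bar y) h1
        have h3 : sEcc G S y = D := by
          have := hEccBar (bar y) h2
          rwa [hbar2] at this
        omega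
end

section
/- The number L_1(n,k) of k-element subsets of n linearly arranged objects containing no two elements in alternate positions (positions differing by exactly 2) satisfies L_1(n,k) = Σ_{ℓ=0}^{k} C(⌊n/2⌋ − ℓ + 1, ℓ) · C(⌈n/2⌉ − (k−ℓ) + 1, k−ℓ). -/
/-!
Splitting a set of positions by parity and halving turns "no two elements differ by 2" into
"no two elements are consecutive" in each half, the even positions forming a row of `⌈n/2⌉`
objects and the odd ones a row of `⌊n/2⌋`. By Kaplansky's lemma a row of `m` objects has
`C(m + 1 - j, j)` such `j`-subsets (Pascal's rule, according to whether the last object is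
chosen); summing over the number `ℓ` of odd positions chosen gives the formula.
-/

open Finset

def diffFree (d m j : ℕ) : Finset (Finset ℕ) :=
  {s ∈ (range m).powersetCard j | ∀ i ∈ s, i + d ∉ s}

lemma mem_diffFree {d m j : ℕ} {s : Finset ℕ} :
    s ∈ diffFree d m j ↔ (∀ i ∈ s, i < m) ∧ #s = j ∧ ∀ i ∈ s, i + d ∉ s := by
  simp [diffFree, mem_powersetCard, subset_iff, and_assoc]

lemma diffFree_zero_right (d m : ℕ) : diffFree d m 0 = {∅} := by
  simp [diffFree, powersetCard_zero, filter_singleton]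

lemma diffFree_eq_empty {d m j : ℕ} (h : m < j) : diffFree d m j = ∅ := by
  rw [diffFree, powersetCard_eq_empty.2 (by simpa using h), filter_empty]

open Classical in
lemma card_fin_eq_card_diffFree (n k : ℕ) :
    (Finset.univ.filter fun s : Finset (Fin n) =>
        s.card = k ∧ ¬∃ i ∈ s, ∃ j ∈ s, (j : ℕ) = (i : ℕ) + 2).card = #(diffFree 2 n k) := by
  rw [diffFree, ← Nat.Iio_eq_range, ← Fin.map_valEmbedding_univ, powersetCard_map, filter_map,
    card_map, powersetCard_eq_filter, filter_filter, powerset_univ]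
  simp

lemma filter_notMem_diffFree_one (m j : ℕ) :
    {s ∈ diffFree 1 (m + 2) j | m + 1 ∉ s} = diffFree 1 (m + 1) j := by
  ext s
  simp only [mem_filter, mem_diffFree]
  grind

lemma card_filter_mem_diffFree_one (m j : ℕ) :
    #{s ∈ diffFree 1 (m + 2) (j + 1) | m + 1 ∈ s} = #(diffFree 1 m j) := by
  refine card_nbij' (·.erase (m + 1)) (insert (m + 1)) ?_ ?_ ?_ ?_
  · intro s hs
    simp only [coe_filter, mem_diffFree, Set.mem_ofPred_eq, mem_coe] at hs ⊢
    -- `m ∉ s` because `m + 1 ∈ s`, so erasing `m + 1` leaves a subset of `range m`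
    grind
  · intro t ht
    simp only [coe_filter, mem_diffFree, Set.mem_ofPred_eq, mem_coe] at ht ⊢
    grind
  · intro s hs
    exact insert_erase (mem_filter.1 hs).2
  · intro t ht
    exact erase_insert fun h => by have := (mem_diffFree.1 ht).1 _ h; omega

lemma card_diffFree_one_add_two (m j : ℕ) :
    #(diffFree 1 (m + 2) (j + 1)) = #(diffFree 1 (m + 1) (j + 1)) + #(diffFree 1 m j) := by
  rw [← card_filter_add_card_filter_not (p := fun s => m + 1 ∈ s), add_comm,
    filter_notMem_diffFree_one, card_filter_mem_diffFree_one]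

theorem card_diffFree_one (m j : ℕ) : #(diffFree 1 m j) = (m + 1 - j).choose j := by
  induction m using Nat.strong_induction_on generalizing j with
  | _ m ih =>
    match m, j with
    | _, 0 => simp [diffFree_zero_right]
    | 0, j + 1 => simp [diffFree_eq_empty]
    | 1, 1 => decide
    | 1, j + 2 => simp [diffFree_eq_empty]
    | m + 2, j + 1 =>
      rw [card_diffFree_one_add_two, ih _ (by omega), ih _ (by omega)]
      rcases le_or_gt j (m + 1) with hj | hj
      · rw [show m + 2 + 1 - (j + 1) = m + 1 - j + 1 by omega, Nat.choose_succ_succ', add_comm,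
          show m + 1 + 1 - (j + 1) = m + 1 - j by omega]
      · rw [Nat.choose_eq_zero_of_lt (by omega), Nat.choose_eq_zero_of_lt (by omega),
          Nat.choose_eq_zero_of_lt (by omega)]

def paritySplit : Finset ℕ ≃ Finset ℕ × Finset ℕ :=
  Equiv.natSumNatEquivNat.symm.finsetCongr.trans sumEquiv.toEquiv

section paritySplit

variable {s : Finset ℕ}

lemma mem_paritySplit_fst {q : ℕ} : q ∈ (paritySplit s).1 ↔ 2 * q ∈ s := by
  simp [paritySplit, Equiv.finsetCongr_apply, Equiv.natSumNatEquivNat_apply]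

lemma mem_paritySplit_snd {q : ℕ} : q ∈ (paritySplit s).2 ↔ 2 * q + 1 ∈ s := by
  simp [paritySplit, Equiv.finsetCongr_apply, Equiv.natSumNatEquivNat_apply]

lemma card_paritySplit_fst_add_snd : #(paritySplit s).1 + #(paritySplit s).2 = #s := by
  simp [paritySplit, Equiv.finsetCongr_apply, card_toLeft_add_card_toRight]

lemma forall_mem_iff_paritySplit (P : ℕ → Prop) :
    (∀ x ∈ s, P x) ↔
      (∀ q ∈ (paritySplit s).1, P (2 * q)) ∧ ∀ q ∈ (paritySplit s).2, P (2 * q + 1) := by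
  simp only [mem_paritySplit_fst, mem_paritySplit_snd]
  refine ⟨fun h => ⟨fun q => h _, fun q => h _⟩, fun ⟨hev, hodd⟩ x hx => ?_⟩
  obtain ⟨q, rfl | rfl⟩ := Nat.even_or_odd' x
  exacts [hev q hx, hodd q hx]

lemma forall_mem_lt_iff_paritySplit (n : ℕ) :
    (∀ x ∈ s, x < n) ↔
      (∀ q ∈ (paritySplit s).1, q < (n + 1) / 2) ∧ ∀ q ∈ (paritySplit s).2, q < n / 2 := by
  rw [forall_mem_iff_paritySplit]
  refine and_congr (forall₂_congr fun q _ => ?_) (forall₂_congr fun q _ => ?_) <;> omega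

lemma forall_mem_add_two_notMem_iff_paritySplit :
    (∀ x ∈ s, x + 2 ∉ s) ↔
      (∀ q ∈ (paritySplit s).1, q + 1 ∉ (paritySplit s).1) ∧
        ∀ q ∈ (paritySplit s).2, q + 1 ∉ (paritySplit s).2 := by
  rw [forall_mem_iff_paritySplit]
  simp only [mem_paritySplit_fst, mem_paritySplit_snd, mul_add]

lemma paritySplit_mem_diffFree_iff {n k ℓ : ℕ} (hℓ : ℓ ≤ k) :
    s ∈ diffFree 2 n k ∧ #(paritySplit s).2 = ℓ ↔
      paritySplit s ∈ diffFree 1 ((n + 1) / 2) (k - ℓ) ×ˢ diffFree 1 (n / 2) ℓ := by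
  have hcard := card_paritySplit_fst_add_snd (s := s)
  rw [mem_product, mem_diffFree, mem_diffFree, mem_diffFree, forall_mem_lt_iff_paritySplit,
    forall_mem_add_two_notMem_iff_paritySplit]
  constructor
  · rintro ⟨⟨⟨hlt_fst, hlt_snd⟩, hk, hfree_fst, hfree_snd⟩, rfl⟩
    exact ⟨⟨hlt_fst, by omega, hfree_fst⟩, hlt_snd, rfl, hfree_snd⟩
  · rintro ⟨⟨hlt_fst, hk, hfree_fst⟩, hlt_snd, rfl, hfree_snd⟩
    exact ⟨⟨⟨hlt_fst, hlt_snd⟩, by omega, hfree_fst, hfree_snd⟩, rfl⟩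

end paritySplit

lemma card_diffFree_two (n k : ℕ) :
    #(diffFree 2 n k) =
      ∑ ℓ ∈ range (k + 1), #(diffFree 1 (n / 2) ℓ) * #(diffFree 1 ((n + 1) / 2) (k - ℓ)) := by
  rw [card_eq_sum_card_fiberwise (f := fun s => #(paritySplit s).2) (t := range (k + 1))]
  · refine sum_congr rfl fun ℓ hℓ => ?_
    rw [mul_comm, ← card_product]
    refine card_equiv paritySplit fun s => ?_
    rw [mem_filter]
    exact paritySplit_mem_diffFree_iff (Nat.lt_succ_iff.1 (mem_range.1 hℓ))
  · intro s hs
    rw [mem_coe, mem_range, Nat.lt_succ_iff, ← (mem_diffFree.1 hs).2.1,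
      ← card_paritySplit_fst_add_snd]
    exact Nat.le_add_left _ _

open Classical in
/-- The number `L₁(n,k)` of `k`-element subsets of `n` linearly arranged positions
containing no two positions differing by exactly `2` satisfies
`L₁(n,k) = Σ_{ℓ=0}^{k} C(⌊n/2⌋ - ℓ + 1, ℓ) · C(⌈n/2⌉ - (k-ℓ) + 1, k-ℓ)`
(with the convention that `C(a,b) = 0` for negative `a - b + 1`, realised here by
truncated subtraction `a + 1 - b`). -/
theorem count_no_two_alternate (n k : ℕ) :
    (Finset.univ.filter fun s : Finset (Fin n) =>
        s.card = k ∧ ¬∃ i ∈ s, ∃ j ∈ s, (j : ℕ) = (i : ℕ) + 2).card =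
      ∑ ℓ ∈ Finset.range (k + 1),
        Nat.choose (n / 2 + 1 - ℓ) ℓ *
          Nat.choose ((n + 1) / 2 + 1 - (k - ℓ)) (k - ℓ) := by
  simp_rw [card_fin_eq_card_diffFree, card_diffFree_two, card_diffFree_one]
end
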